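/- arXiv:1909.10217 — 5 statements merged into one kernel-verified Lean document; each statement's English description precedes it below -/
import Mathlib

section
/- Let m ≥ 1 and let x : ℤ/mℤ → ℤ be a sequence of integers with total sum ∑_{i} x_i = −1. Then there exists exactly one index j ∈ ℤ/mℤ such that the cyclically shifted partial sums satisfy ∑_{s=0}^{t−1} x_{j+s} ≥ 0 for every t with 1 ≤ t ≤ m−1 (equivalently: the path of partial sums of the shift starting at j stays nonnegative before time m and reaches its value −1 for the first time at time m). -/
/-!
Let `S n = x 0 + ⋯ + x (n - 1)` (indices mod `m`), so that `S (n + m) = S n - 1`. The shift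
starting at `j` has partial sums `S (j + t) - S j`, so `j` is admissible exactly when `S j` is
a minimum of `S` on the window `[j, j + m)`. The first minimiser of `S` on `[0, m)` is
admissible: past the end of `[0, m)` the drop of `1` per period is compensated by `S` being
strictly larger before the first minimiser. Two admissible `a < b` in `[0, m)` are impossible,
since `S a ≤ S b ≤ S (a + m) = S a - 1`.
-/

open Finset

section WindowMin

variable {S : ℕ → ℤ} {m : ℕ}

def IsWindowMin (S : ℕ → ℤ) (m n : ℕ) : Prop :=
  ∀ t, 1 ≤ t → t ≤ m - 1 → S n ≤ S (n + t)

theorem exists_isWindowMin (hS : ∀ n, S (n + m) = S n - 1) (hm : 0 < m) :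
    ∃ n < m, IsWindowMin S m n := by
  classical
  have hmin : ∃ n, n < m ∧ ∀ k < m, S n ≤ S k := by
    obtain ⟨n, hn, hle⟩ := exists_min_image (range m) S ⟨0, mem_range.mpr hm⟩
    exact ⟨n, mem_range.mp hn, fun k hk => hle k (mem_range.mpr hk)⟩
  set n := Nat.find hmin
  obtain ⟨hn, hle⟩ : n < m ∧ ∀ k < m, S n ≤ S k := Nat.find_spec hmin
  have hlt : ∀ i < n, S n < S i := by
    intro i hi
    have hnot := Nat.find_min hmin hi
    push Not at hnot
    obtain ⟨k, hk, hki⟩ := hnot (hi.trans hn)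
    exact (hle k hk).trans_lt hki
  refine ⟨n, hn, fun t _ ht => ?_⟩
  rcases lt_or_ge (n + t) m with hwin | hwrap
  · exact hle _ hwin
  · have hS' := hS (n + t - m)
    rw [Nat.sub_add_cancel hwrap] at hS'
    have := hlt (n + t - m) (by omega)
    omega

theorem IsWindowMin.not_lt (hS : ∀ n, S (n + m) = S n - 1) {a b : ℕ} (hbm : b < m)
    (ha : IsWindowMin S m a) (hb : IsWindowMin S m b) : ¬ a < b := by
  intro hab
  have h₁ := ha (b - a) (by omega) (by omega)
  have h₂ := hb (a + m - b) (by omega) (by omega)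
  rw [Nat.add_sub_cancel' hab.le] at h₁
  rw [Nat.add_sub_cancel' (by omega), hS] at h₂
  omega

theorem IsWindowMin.eq (hS : ∀ n, S (n + m) = S n - 1) {a b : ℕ} (ham : a < m) (hbm : b < m)
    (ha : IsWindowMin S m a) (hb : IsWindowMin S m b) : a = b :=
  le_antisymm (Nat.le_of_not_lt (hb.not_lt hS ham ha)) (Nat.le_of_not_lt (ha.not_lt hS hbm hb))

end WindowMin

namespace ZMod

variable {m : ℕ} {M : Type*} [AddCommMonoid M]

theorem sum_range_natCast [NeZero m] (f : ZMod m → M) : ∑ i ∈ range m, f i = ∑ i, f i := by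
  refine sum_nbij (↑) (fun _ _ => mem_univ _) ?_ ?_ (fun _ _ => rfl)
  · intro a ha b hb hab
    rw [← val_cast_of_lt (mem_range.mp ha), ← val_cast_of_lt (mem_range.mp hb)]
    exact congrArg val hab
  · intro j _
    exact ⟨j.val, mem_range.mpr j.val_lt, natCast_zmod_val j⟩

def partialSum (x : ZMod m → M) (n : ℕ) : M :=
  ∑ i ∈ range n, x i

theorem partialSum_add (x : ZMod m → M) (n t : ℕ) :
    partialSum x (n + t) = partialSum x n + ∑ s ∈ range t, x ((n : ZMod m) + s) := by
  simp only [partialSum, sum_range_add, Nat.cast_add]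

theorem partialSum_add_period [NeZero m] (x : ZMod m → M) (n : ℕ) :
    partialSum x (n + m) = partialSum x n + ∑ i, x i := by
  rw [partialSum_add, sum_range_natCast (fun i => x ((n : ZMod m) + i)),
    Fintype.sum_equiv (Equiv.addLeft (n : ZMod m)) (fun i => x (n + i)) x fun _ => rfl]

theorem sum_range_add_nonneg_iff [NeZero m] (x : ZMod m → ℤ) (j : ZMod m) :
    (∀ t : ℕ, 1 ≤ t → t ≤ m - 1 → 0 ≤ ∑ s ∈ range t, x (j + (s : ZMod m))) ↔
      IsWindowMin (partialSum x) m j.val := by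
  simp only [IsWindowMin, partialSum_add, natCast_zmod_val, le_add_iff_nonneg_right]

end ZMod

theorem cyclic_lemma_general (m : ℕ) [NeZero m] (x : ZMod m → ℤ)
    (hsum : ∑ i : ZMod m, x i = -1) :
    ∃! j : ZMod m, ∀ t : ℕ, 1 ≤ t → t ≤ m - 1 →
      0 ≤ ∑ s ∈ Finset.range t, x (j + (s : ZMod m)) := by
  have hS : ∀ n, ZMod.partialSum x (n + m) = ZMod.partialSum x n - 1 := fun n => by
    rw [ZMod.partialSum_add_period, hsum, sub_eq_add_neg]
  obtain ⟨n, hn, hwin⟩ := exists_isWindowMin hS (NeZero.pos m)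
  have hval : (n : ZMod m).val = n := ZMod.val_cast_of_lt hn
  refine ⟨n, (ZMod.sum_range_add_nonneg_iff x _).mpr (by rwa [hval]), fun j hj => ?_⟩
  refine ZMod.val_injective m ?_
  rw [hval]
  exact ((ZMod.sum_range_add_nonneg_iff x j).mp hj).eq hS j.val_lt hn hwin

/-- **Cyclic (Feller/Kemperman) lemma.** If `x : ZMod m → ℤ` has total sum `-1`,
then there is exactly one starting index `j` such that all the cyclically shifted
partial sums `∑_{s=0}^{t-1} x (j+s)` are nonnegative for `1 ≤ t ≤ m-1`. -/
theorem cyclic_lemma (m : ℕ) [NeZero m] (hm : 1 ≤ m) (x : ZMod m → ℤ)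
    (hsum : ∑ i : ZMod m, x i = -1) :
    ∃! j : ZMod m, ∀ t : ℕ, 1 ≤ t → t ≤ m - 1 →
      0 ≤ ∑ s ∈ Finset.range t, x (j + (s : ZMod m)) :=
  cyclic_lemma_general m x hsum
end

section
/- For every sufficiently small δ > 0 there exist constants c > 0 and c' > 0 such that for every integer n ≥ 1, | P(τ < ∞, R_τ = 0, D_τ = n) − ∑_{m ≥ n, |n/m − μ(−1)| ≤ δ} (1/m) · P(D_m = n, R_m = 0) | ≤ c' · exp(−c n). -/
/-!
By the cycle lemma, if `x₀ + ⋯ + x_{m-1} = -1` then exactly one of the `m` cyclic rotations of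
`(x₀, …, x_{m-1})` keeps the walk `1 + x₀ + ⋯ + x_{k-1}` positive for `0 < k < m`: the rotation
starting at the first minimiser of the partial sums. Since i.i.d. steps are exchangeable, this gives
`P(D_m = n, R_m = 0) = m · P(τ = m, R_τ = 0, D_τ = n)`, so the first-passage probability is exactly
`∑_m (1/m) P(D_m = n, R_m = 0)`. Outside the window `|n/m - μ(-1)| ≤ δ`, Hoeffding's inequality for
the count `D_m` bounds the terms by `exp(-2δ²m) ≤ exp(-δ²(n + m))`, and these sum to
`O(exp(-δ²n))`.
-/

open MeasureTheory ProbabilityTheory Finset Real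

lemma abs_sub_tsum_ite_le {ι : Type*} {a b g : ι → ℝ} {s t : ℝ} {c : ι → Prop} [DecidablePred c]
    (ha : HasSum a s) (ha0 : ∀ i, 0 ≤ a i) (hb : ∀ i, c i → b i = a i) (hg : HasSum g t)
    (hg0 : ∀ i, 0 ≤ g i) (hag : ∀ i, ¬c i → a i ≤ g i) :
    |s - ∑' i, if c i then b i else 0| ≤ t := by
  have hba : (fun i => if c i then b i else 0) = fun i => if c i then a i else 0 :=
    funext fun i => by split_ifs with h; exacts [hb i h, rfl]
  have hc : Summable fun i => if c i then a i else 0 :=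
    ha.summable.of_nonneg_of_le (fun i => by split_ifs <;> simp [ha0])
      (fun i => by split_ifs <;> simp [ha0])
  have hd : HasSum (fun i => if c i then 0 else a i) (s - ∑' i, if c i then a i else 0) :=
    (ha.sub hc.hasSum).congr_fun fun i => by split_ifs <;> ring
  rw [hba, abs_of_nonneg (hd.nonneg fun i => by split_ifs <;> simp [ha0])]
  exact hasSum_le (fun i => by split_ifs with h; exacts [hg0 i, hag i h]) hd hg

lemma hasSum_exp_neg_mul_add {c : ℝ} (hc : 0 < c) (x : ℝ) :
    HasSum (fun m : ℕ => exp (-c * (x + m))) ((1 - exp (-c))⁻¹ * exp (-c * x)) := by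
  rw [mul_comm]
  refine ((hasSum_geometric_of_lt_one (exp_nonneg (-c)) (exp_lt_one_iff.2 (by linarith))).mul_left
    (exp (-c * x))).congr_fun fun m => ?_
  rw [← exp_nat_mul, ← exp_add]
  ring_nf

lemma existsUnique_first_argmin {β : Type*} [LinearOrder β] (f : ℕ → β) {m : ℕ} (hm : 0 < m) :
    ∃! j : Fin m, (∀ l < (j : ℕ), f j < f l) ∧ ∀ l < m, f j ≤ f l := by
  classical
  obtain ⟨l₀, hl₀, hmin⟩ := exists_min_image (range m) f ⟨0, mem_range.2 hm⟩
  have hex : ∃ j, j < m ∧ ∀ l < m, f j ≤ f l :=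
    ⟨l₀, mem_range.1 hl₀, fun l hl => hmin l (mem_range.2 hl)⟩
  obtain ⟨hjm, hjmin⟩ := Nat.find_spec hex
  have hjfirst : ∀ l < Nat.find hex, f (Nat.find hex) < f l := fun l hl => by
    by_contra! hle
    exact Nat.find_min hex hl ⟨hl.trans hjm, fun l' hl' => hle.trans (hjmin l' hl')⟩
  refine ⟨⟨Nat.find hex, hjm⟩, ⟨hjfirst, hjmin⟩, ?_⟩
  rintro j ⟨hfirst, hmin⟩
  by_contra hne
  rcases Fin.lt_or_lt_of_ne hne with hlt | hlt
  · exact (hmin _ hjm).not_gt (hjfirst _ hlt)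
  · exact (hjmin _ j.2).not_gt (hfirst _ hlt)

/-- Rotates `{0, …, m - 1}` by `j` and fixes every `i ≥ m`; being a permutation of `ℕ`, it
preserves the joint law of an i.i.d. sequence. -/
def rotatePerm {m : ℕ} (j : Fin m) : Equiv.Perm ℕ where
  toFun i := if i < m then (if j + i < m then j + i else j + i - m) else i
  invFun i := if i < m then (if j ≤ i then i - j else i + m - j) else i
  left_inv i := by have := j.2; dsimp only; split_ifs <;> omega
  right_inv i := by have := j.2; dsimp only; split_ifs <;> omega

section Rotation

variable {m : ℕ} (j : Fin m)

lemma rotatePerm_apply_of_add_lt {i : ℕ} (hi : j + i < m) : rotatePerm j i = j + i := by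
  simp [rotatePerm, hi, show i < m by omega]

lemma rotatePerm_apply_of_le_add {i : ℕ} (hi : i < m) (hji : m ≤ j + i) :
    rotatePerm j i = j + i - m := by
  simp [rotatePerm, hi, hji.not_gt]

lemma rotatePerm_apply_of_le {i : ℕ} (hi : m ≤ i) : rotatePerm j i = i := by
  simp [rotatePerm, hi.not_gt]

lemma sum_range_comp_rotatePerm {M : Type*} [AddCommMonoid M] (f : ℕ → M) :
    ∑ i ∈ range m, f (rotatePerm j i) = ∑ i ∈ range m, f i :=
  Equiv.Perm.sum_comp _ _ _ fun i hi => by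
    by_contra hm
    exact hi (rotatePerm_apply_of_le j (by simpa using hm))

lemma card_filter_comp_rotatePerm {α : Type*} [DecidableEq α] (x : ℕ → α) (a : α) :
    #{i ∈ range m | x (rotatePerm j i) = a} = #{i ∈ range m | x i = a} := by
  simp only [card_filter]
  exact sum_range_comp_rotatePerm j fun i => if x i = a then 1 else 0

variable (x : ℕ → ℤ) {k : ℕ}

lemma sum_range_rotatePerm_of_add_le (hk : j + k ≤ m) :
    ∑ i ∈ range k, x (rotatePerm j i) = ∑ i ∈ range (j + k), x i - ∑ i ∈ range j, x i := by
  rw [sum_range_add_sub_sum_range]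
  exact sum_congr rfl fun i hi => by rw [rotatePerm_apply_of_add_lt j (by simp at hi; omega)]

lemma sum_range_rotatePerm_of_le_add (hk : k ≤ m) (hjk : m ≤ j + k) :
    ∑ i ∈ range k, x (rotatePerm j i) =
      ∑ i ∈ range m, x i - ∑ i ∈ range j, x i + ∑ i ∈ range (j + k - m), x i := by
  obtain ⟨l, rfl⟩ : ∃ l, k = (m - j) + l := ⟨j + k - m, by omega⟩
  rw [sum_range_add, sum_range_rotatePerm_of_add_le j x (by omega), Nat.add_sub_cancel' j.2.le,
    show ↑j + (m - ↑j + l) - m = l by omega]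
  congr 1
  exact sum_congr rfl fun i hi => by
    simp only [mem_range] at hi
    rw [rotatePerm_apply_of_le_add j (by omega) (by omega)]
    congr 1; omega

end Rotation

/-- The event `{τ = m, R_τ = 0}` for the walk `R_k = 1 + x₀ + ⋯ + x_{k-1}`. -/
def HitsZeroFirstAt (x : ℕ → ℤ) (m : ℕ) : Prop :=
  1 + ∑ i ∈ range m, x i = 0 ∧ ∀ i, 1 ≤ i → i < m → 1 ≤ 1 + ∑ k ∈ range i, x k

namespace HitsZeroFirstAt

variable {x : ℕ → ℤ} {m m' : ℕ}

lemma pos (h : HitsZeroFirstAt x m) : 0 < m := by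
  rcases Nat.eq_zero_or_pos m with rfl | hm
  · simpa using h.1
  · exact hm

lemma unique (h : HitsZeroFirstAt x m) (h' : HitsZeroFirstAt x m') : m = m' := by
  by_contra hne
  rcases Nat.lt_or_gt_of_ne hne with hlt | hlt
  · have := h'.2 m h.pos hlt; have := h.1; omega
  · have := h.2 m' h'.pos hlt; have := h'.1; omega

end HitsZeroFirstAt

lemma measurableSet_hitsZeroFirstAt (m : ℕ) : MeasurableSet {x : ℕ → ℤ | HitsZeroFirstAt x m} := by
  unfold HitsZeroFirstAt; measurability

lemma measurableSet_card_filter_eq {α : Type*} [MeasurableSpace α] [MeasurableSingletonClass α]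
    [DecidableEq α] (m n : ℕ) (a : α) :
    MeasurableSet {x : ℕ → α | #{i ∈ range m | x i = a} = n} := by
  simp_rw [card_filter]
  refine measurableSet_eq_fun (Finset.measurable_sum _ fun i _ => Measurable.ite ?_
    measurable_const measurable_const) measurable_const
  exact measurableSet_singleton a |>.preimage (measurable_pi_apply i)

section CycleLemma

variable {x : ℕ → ℤ} {m : ℕ}

lemma hitsZeroFirstAt_comp_rotatePerm_iff (hx : 1 + ∑ i ∈ range m, x i = 0) (j : Fin m) :
    HitsZeroFirstAt (x ∘ rotatePerm j) m ↔
      (∀ l < (j : ℕ), ∑ i ∈ range j, x i < ∑ i ∈ range l, x i) ∧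
        ∀ l < m, ∑ i ∈ range j, x i ≤ ∑ i ∈ range l, x i := by
  have hj := j.2
  simp only [HitsZeroFirstAt, Function.comp_apply, sum_range_comp_rotatePerm j x, hx, true_and]
  constructor
  · intro h
    have hbefore : ∀ l < (j : ℕ), ∑ i ∈ range j, x i < ∑ i ∈ range l, x i := fun l hl => by
      have := h (m - j + l) (by omega) (by omega)
      rw [sum_range_rotatePerm_of_le_add j x (by omega) (by omega),
        show ↑j + (m - ↑j + l) - m = l by omega] at this
      omega
    refine ⟨hbefore, fun l hl => ?_⟩
    rcases lt_trichotomy l j with hlj | rfl | hjl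
    · exact (hbefore l hlj).le
    · exact le_rfl
    · have := h (l - j) (by omega) (by omega)
      rw [sum_range_rotatePerm_of_add_le j x (by omega), Nat.add_sub_cancel' hjl.le] at this
      omega
  · rintro ⟨hbefore, hafter⟩ k hk hkm
    by_cases hjk : j + k < m
    · rw [sum_range_rotatePerm_of_add_le j x hjk.le]
      have := hafter (j + k) hjk
      omega
    · rw [sum_range_rotatePerm_of_le_add j x hkm.le (by omega)]
      have := hbefore (j + k - m) (by omega)
      omega

theorem existsUnique_hitsZeroFirstAt_comp_rotatePerm (hx : 1 + ∑ i ∈ range m, x i = 0) :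
    ∃! j : Fin m, HitsZeroFirstAt (x ∘ rotatePerm j) m := by
  have hm : 0 < m := Nat.pos_of_ne_zero fun h => by simp [h] at hx
  simpa only [hitsZeroFirstAt_comp_rotatePerm_iff hx] using
    existsUnique_first_argmin (fun k => ∑ i ∈ range k, x i) hm

end CycleLemma

section Exchangeability

variable {Ω ι α : Type*} [MeasurableSpace Ω] [MeasurableSpace α] {P : Measure Ω}
  {X : ι → Ω → α} {ν : Measure α}

lemma ProbabilityTheory.iIndepFun.measure_comp_mem (hind : iIndepFun X P)
    (hX : ∀ i, Measurable (X i)) (hlaw : ∀ i, P.map (X i) = ν) {g : ι → ι}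
    (hg : Function.Injective g) {S : Set (ι → α)} (hS : MeasurableSet S) :
    P {ω | (fun i => X (g i) ω) ∈ S} = P {ω | (fun i => X i ω) ∈ S} := by
  change P ((fun ω i => X (g i) ω) ⁻¹' S) = P ((fun ω i => X i ω) ⁻¹' S)
  rw [← Measure.map_apply (measurable_pi_lambda _ fun i => hX (g i)) hS,
    ← Measure.map_apply (measurable_pi_lambda _ hX) hS,
    (hind.precomp hg).map_fun_eq_infinitePi_map fun i => hX (g i),
    hind.map_fun_eq_infinitePi_map hX]
  simp only [hlaw]

end Exchangeability

section FirstPassage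

variable {Ω : Type*} [MeasurableSpace Ω] {P : Measure Ω} {X : ℕ → Ω → ℤ}

lemma measure_mem_and_one_add_sum_eq_zero_eq_mul (hind : iIndepFun X P)
    (hX : ∀ i, Measurable (X i)) {ν : Measure ℤ} (hlaw : ∀ i, P.map (X i) = ν) {m : ℕ}
    {A : Set (ℕ → ℤ)} (hA : MeasurableSet A)
    (hrot : ∀ (j : Fin m) x, x ∘ rotatePerm j ∈ A ↔ x ∈ A) :
    P {ω | (fun i => X i ω) ∈ A ∧ 1 + ∑ i ∈ range m, X i ω = 0} =
      m * P {ω | HitsZeroFirstAt (fun i => X i ω) m ∧ (fun i => X i ω) ∈ A} := by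
  set E := {x | HitsZeroFirstAt x m ∧ x ∈ A}
  have hE : MeasurableSet E := (measurableSet_hitsZeroFirstAt m).inter hA
  have hsplit : {ω | (fun i => X i ω) ∈ A ∧ 1 + ∑ i ∈ range m, X i ω = 0} =
      ⋃ j ∈ (univ : Finset (Fin m)), {ω | (fun i => X (rotatePerm j i) ω) ∈ E} := by
    ext ω
    simp only [Set.mem_ofPred_eq, Set.mem_iUnion, mem_univ, exists_true_left, E]
    constructor
    · rintro ⟨hωA, hω⟩
      obtain ⟨j, hj, -⟩ := existsUnique_hitsZeroFirstAt_comp_rotatePerm hω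
      exact ⟨j, hj, (hrot j _).2 hωA⟩
    · rintro ⟨j, hj, hjA⟩
      exact ⟨(hrot j _).1 hjA, sum_range_comp_rotatePerm j (X · ω) ▸ hj.1⟩
  have hdisj : Set.PairwiseDisjoint (↑(univ : Finset (Fin m)) : Set (Fin m))
      fun j => {ω | (fun i => X (rotatePerm j i) ω) ∈ E} := by
    intro j _ j' _ hne
    refine Set.disjoint_left.2 fun ω hj hj' => hne ?_
    have hx : 1 + ∑ i ∈ range m, X i ω = 0 := sum_range_comp_rotatePerm j (X · ω) ▸ hj.1.1
    exact (existsUnique_hitsZeroFirstAt_comp_rotatePerm hx).unique hj.1 hj'.1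
  rw [hsplit, measure_biUnion_finset hdisj fun j _ => measurableSet_preimage
      (measurable_pi_lambda _ fun i => hX _) hE]
  simp only [hind.measure_comp_mem hX hlaw (rotatePerm _).injective hE, sum_const, card_univ,
    Fintype.card_fin, nsmul_eq_mul]
  rfl

lemma hasSum_measureReal_hitsZeroFirstAt [IsFiniteMeasure P] (hX : ∀ i, Measurable (X i))
    {A : ℕ → Set (ℕ → ℤ)} (hA : ∀ m, MeasurableSet (A m)) :
    HasSum (fun m => P.real {ω | HitsZeroFirstAt (fun i => X i ω) m ∧ (fun i => X i ω) ∈ A m})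
      (P.real {ω | ∃ m, HitsZeroFirstAt (fun i => X i ω) m ∧ (fun i => X i ω) ∈ A m}) := by
  have hdisj : Pairwise (Function.onFun Disjoint
      fun m => {ω | HitsZeroFirstAt (fun i => X i ω) m ∧ (fun i => X i ω) ∈ A m}) :=
    fun m m' hne => Set.disjoint_left.2 fun ω h h' => hne (h.1.unique h'.1)
  have hmeas : ∀ m, MeasurableSet
      {ω | HitsZeroFirstAt (fun i => X i ω) m ∧ (fun i => X i ω) ∈ A m} := fun m =>
    measurableSet_preimage (measurable_pi_lambda _ hX)
      ((measurableSet_hitsZeroFirstAt m).inter (hA m))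
  have hU := measure_iUnion (μ := P) hdisj hmeas
  rw [← Set.ofPred_exists] at hU
  simp only [measureReal_def, hU, ENNReal.tsum_toReal_eq fun m => measure_ne_top P _]
  exact ENNReal.hasSum_toReal (hU ▸ measure_ne_top P _)

end FirstPassage

section Hoeffding

variable {Ω α : Type*} [MeasurableSpace Ω] [MeasurableSpace α] [MeasurableSingletonClass α]
  [DecidableEq α] {P : Measure Ω} [IsProbabilityMeasure P] {X : ℕ → Ω → α} {a : α} {p : ℝ}

lemma measureReal_card_filter_eq_le_exp (hX : ∀ i, Measurable (X i)) (hind : iIndepFun X P)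
    (hp : ∀ i, P.real {ω | X i ω = a} = p) {δ : ℝ} (hδ : 0 ≤ δ) {m n : ℕ}
    (hdev : δ * m ≤ |(n : ℝ) - m * p|) :
    P.real {ω | #{i ∈ range m | X i ω = a} = n} ≤ exp (-2 * δ ^ 2 * m) := by
  set φ : α → ℝ := ({a} : Set α).indicator 1
  have hφ : Measurable φ := measurable_one.indicator (measurableSet_singleton a)
  have hmean : ∀ i, P[φ ∘ X i] = p := fun i => by
    rw [← hp i]
    exact integral_indicator_one ((measurableSet_singleton a).preimage (hX i))
  have hsubG : ∀ i, HasSubgaussianMGF (fun ω => φ (X i ω) - p) ((‖(1 : ℝ) - 0‖₊ / 2) ^ 2) P :=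
    fun i => hmean i ▸ hasSubgaussianMGF_of_mem_Icc (hφ.comp (hX i)).aemeasurable
      (ae_of_all _ fun ω => by simp only [φ, Set.indicator]; split_ifs <;> simp)
  have hcount : ∀ ω, ∑ i ∈ range m, (φ (X i ω) - p) = #{i ∈ range m | X i ω = a} - m * p := by
    intro ω
    simp only [φ, sum_sub_distrib, Set.indicator_apply, Set.mem_singleton_iff, Pi.one_apply,
      sum_boole, sum_const, card_range, nsmul_eq_mul]
  have hind' : iIndepFun (fun i ω => φ (X i ω) - p) P :=
    hind.comp (fun _ x => φ x - p) fun _ => hφ.sub_const p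
  have hexp : exp (-(δ * m) ^ 2 / (2 * m * ((‖(1 : ℝ) - 0‖₊ / 2) ^ 2 : NNReal))) =
      exp (-2 * δ ^ 2 * m) := by
    congr 1
    rcases eq_or_ne (m : ℝ) 0 with hm | hm
    · simp [hm]
    · norm_num
      field_simp
      ring
  rcases le_or_gt 0 ((n : ℝ) - m * p) with hsign | hsign
  · rw [abs_of_nonneg hsign] at hdev
    refine le_trans (measureReal_mono fun ω hω => ?_) (hexp ▸
      HasSubgaussianMGF.measure_sum_range_ge_le_of_iIndepFun hind' (fun i _ => hsubG i)
        (by positivity))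
    simp only [Set.mem_ofPred_eq] at hω ⊢
    rw [hcount, hω]
    exact hdev
  · rw [abs_of_neg hsign] at hdev
    refine le_trans (measureReal_mono fun ω hω => ?_) (hexp ▸
      HasSubgaussianMGF.measure_sum_range_ge_le_of_iIndepFun
        (hind'.comp (fun _ => Neg.neg) fun _ => measurable_neg) (fun i _ => (hsubG i).neg)
        (by positivity))
    simp only [Set.mem_ofPred_eq, Function.comp_apply, sum_neg_distrib] at hω ⊢
    rw [hcount, hω]
    linarith

lemma measureReal_card_filter_eq_le_of_not_window (hX : ∀ i, Measurable (X i))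
    (hind : iIndepFun X P) (hp : ∀ i, P.real {ω | X i ω = a} = p) {δ : ℝ} (hδ : 0 ≤ δ)
    {m n : ℕ} (hwin : ¬(n ≤ m ∧ |(n : ℝ) / m - p| ≤ δ)) :
    P.real {ω | #{i ∈ range m | X i ω = a} = n} ≤ exp (-δ ^ 2 * (n + m)) := by
  by_cases hnm : n ≤ m
  · have hdev : δ * m ≤ |(n : ℝ) - m * p| := by
      rcases Nat.eq_zero_or_pos m with rfl | hm
      · simp
      have hm' : (0 : ℝ) < m := by exact_mod_cast hm
      calc δ * m ≤ |(n : ℝ) / m - p| * m := by gcongr; exact (not_le.1 fun h => hwin ⟨hnm, h⟩).le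
        _ = |(n : ℝ) - m * p| := by
          rw [← abs_of_pos hm', ← abs_mul, abs_of_pos hm']
          congr 1
          field_simp
    refine (measureReal_card_filter_eq_le_exp hX hind hp hδ hdev).trans (exp_le_exp.2 ?_)
    have : (n : ℝ) ≤ m := by exact_mod_cast hnm
    nlinarith [sq_nonneg δ]
  · have hempty : {ω | #{i ∈ range m | X i ω = a} = n} = ∅ :=
      Set.eq_empty_of_forall_notMem fun ω hω =>
        hnm (hω ▸ (card_filter_le _ _).trans (card_range m).le)
    rw [hempty, measureReal_empty]
    positivity

end Hoeffding

lemma measureReal_eq_toReal_of_map_eq_toMeasure {Ω α : Type*} [MeasurableSpace Ω]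
    [MeasurableSpace α] [MeasurableSingletonClass α] {P : Measure Ω} {Y : Ω → α} {μ : PMF α}
    (hY : Measurable Y) (hlaw : P.map Y = μ.toMeasure) (a : α) :
    P.real {ω | Y ω = a} = (μ a).toReal := by
  rw [measureReal_def, ← PMF.toMeasure_apply_singleton μ a (measurableSet_singleton a), ← hlaw,
    Measure.map_apply hY (measurableSet_singleton a)]
  rfl

theorem first_passage_approx_sum_general
    (Ω : Type*) [MeasurableSpace Ω] (P : Measure Ω) [IsProbabilityMeasure P]
    (μ : PMF ℤ) (X : ℕ → Ω → ℤ)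
    (hX : ∀ i, Measurable (X i))
    (hiid : iIndepFun X P)
    (hlaw : ∀ i, Measure.map (X i) P = μ.toMeasure) :
    ∃ δ₀ : ℝ, 0 < δ₀ ∧ ∀ δ : ℝ, 0 < δ → δ ≤ δ₀ →
      ∃ c : ℝ, 0 < c ∧ ∃ c' : ℝ, 0 < c' ∧ ∀ n : ℕ, 1 ≤ n →
        |(P {ω | ∃ m : ℕ, 1 ≤ m ∧ 1 + ∑ i ∈ Finset.range m, X i ω = 0 ∧
                  (∀ i, 1 ≤ i → i < m → 1 ≤ 1 + ∑ k ∈ Finset.range i, X k ω) ∧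
                  ((Finset.range m).filter (fun i => X i ω = -1)).card = n}).toReal -
          ∑' m : ℕ, (if n ≤ m ∧ |(n : ℝ) / (m : ℝ) - (μ (-1)).toReal| ≤ δ then
              (1 / (m : ℝ)) *
                (P {ω | ((Finset.range m).filter (fun i => X i ω = -1)).card = n ∧
                        1 + ∑ i ∈ Finset.range m, X i ω = 0}).toReal
            else 0)| ≤ c' * Real.exp (-c * n) := by
  refine ⟨1, one_pos, fun δ hδ _ => ⟨δ ^ 2, by positivity, (1 - exp (-δ ^ 2))⁻¹,
    inv_pos.2 (sub_pos.2 (exp_lt_one_iff.2 (neg_neg_of_pos (by positivity)))), fun n hn => ?_⟩⟩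
  let A : ℕ → Set (ℕ → ℤ) := fun m => {x | #{i ∈ range m | x i = -1} = n}
  have hrot (m : ℕ) (j : Fin m) (x : ℕ → ℤ) : x ∘ rotatePerm j ∈ A m ↔ x ∈ A m :=
    Iff.of_eq (congrArg (· = n) (card_filter_comp_rotatePerm j x (-1)))
  have hwin (m : ℕ) (hm : 1 ≤ m) : 1 / (m : ℝ) * (P {ω | #{i ∈ range m | X i ω = -1} = n ∧
      1 + ∑ i ∈ range m, X i ω = 0}).toReal =
        P.real {ω | HitsZeroFirstAt (X · ω) m ∧ (X · ω) ∈ A m} := by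
    have h := congrArg ENNReal.toReal <| measure_mem_and_one_add_sum_eq_zero_eq_mul hiid hX hlaw
      (measurableSet_card_filter_eq m n (-1)) (hrot m)
    rw [ENNReal.toReal_mul, ENNReal.toReal_natCast] at h
    rw [one_div, inv_mul_eq_iff_eq_mul₀ (by positivity)]
    exact h
  have hFP : {ω | ∃ m, 1 ≤ m ∧ 1 + ∑ i ∈ range m, X i ω = 0 ∧
      (∀ i, 1 ≤ i → i < m → 1 ≤ 1 + ∑ k ∈ range i, X k ω) ∧ #{i ∈ range m | X i ω = -1} = n} =
        {ω | ∃ m, HitsZeroFirstAt (X · ω) m ∧ (X · ω) ∈ A m} :=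
    Set.ext fun ω => exists_congr fun m =>
      ⟨fun ⟨_, h₁, h₂, h₃⟩ => ⟨⟨h₁, h₂⟩, h₃⟩, fun ⟨h, h₃⟩ => ⟨h.pos, h.1, h.2, h₃⟩⟩
  rw [hFP]
  exact abs_sub_tsum_ite_le (hasSum_measureReal_hitsZeroFirstAt hX
      fun m => measurableSet_card_filter_eq m n (-1)) (fun _ => measureReal_nonneg)
    (fun m h => hwin m (hn.trans h.1)) (hasSum_exp_neg_mul_add (by positivity) n)
    (fun _ => (exp_pos _).le) fun m hm => (measureReal_mono fun ω hω => hω.2).trans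
      (measureReal_card_filter_eq_le_of_not_window hX hiid
        (fun i => measureReal_eq_toReal_of_map_eq_toMeasure (hX i) (hlaw i) (-1)) hδ.le hm)

/-- The first-passage probability `P(τ < ∞, R_τ = 0, D_τ = n)` is approximated, up to an
exponentially small error, by the sum `∑_{m ≥ n, |n/m - μ(-1)| ≤ δ} (1/m) P(D_m = n, R_m = 0)`.
Here `τ = inf{k ≥ 1 : R_k ≤ 0}`, and the event `{τ < ∞, R_τ = 0, D_τ = n}` is expressed as
the existence of `m ≥ 1` with `R_m = 0`, `R_i ≥ 1` for `1 ≤ i < m` and `D_m = n`. -/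
theorem first_passage_approx_sum
    (Ω : Type*) [MeasurableSpace Ω] (P : Measure Ω) [IsProbabilityMeasure P]
    (μ : PMF ℤ) (X : ℕ → Ω → ℤ)
    (hX : ∀ i, Measurable (X i))
    (hiid : iIndepFun X P)
    (hlaw : ∀ i, Measure.map (X i) P = μ.toMeasure)
    (hsupp : ∀ k : ℤ, μ k ≠ 0 → k = -1 ∨ 2 ∣ k)
    (hpos : 0 < μ (-1)) (hlt : μ (-1) < 1)
    (htail : ∃ c : ℝ, 0 < c ∧ ∃ k₀ : ℕ, 1 ≤ k₀ ∧ ∀ k : ℕ, k₀ ≤ k →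
      ENNReal.ofReal (c * (k : ℝ) ^ (-(5/2) : ℝ)) ≤ μ (-(2 * (k : ℤ)))) :
    ∃ δ₀ : ℝ, 0 < δ₀ ∧ ∀ δ : ℝ, 0 < δ → δ ≤ δ₀ →
      ∃ c : ℝ, 0 < c ∧ ∃ c' : ℝ, 0 < c' ∧ ∀ n : ℕ, 1 ≤ n →
        |(P {ω | ∃ m : ℕ, 1 ≤ m ∧ 1 + ∑ i ∈ Finset.range m, X i ω = 0 ∧
                  (∀ i, 1 ≤ i → i < m → 1 ≤ 1 + ∑ k ∈ Finset.range i, X k ω) ∧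
                  ((Finset.range m).filter (fun i => X i ω = -1)).card = n}).toReal -
          ∑' m : ℕ, (if n ≤ m ∧ |(n : ℝ) / (m : ℝ) - (μ (-1)).toReal| ≤ δ then
              (1 / (m : ℝ)) *
                (P {ω | ((Finset.range m).filter (fun i => X i ω = -1)).card = n ∧
                        1 + ∑ i ∈ Finset.range m, X i ω = 0}).toReal
            else 0)| ≤ c' * Real.exp (-c * n) :=
  first_passage_approx_sum_general Ω P μ X hX hiid hlaw
end

section
/- Assume H^↑ is μ-harmonic on the positive integers, i.e. H^↑(p) = ∑_{k∈ℤ} μ(k) · H^↑(p+k) for every p ≥ 1. Then for every p ≥ 1 and every ℓ with 1 ≤ ℓ ≤ p, ∑_{k≥0} ν(k) · H^↑(p+2k) + (1/2) ∑_{k≥1} ν(−k) · H^↑(max(p−2k, p−ℓ)) + (1/2) ∑_{k≥1} ν(−k) · H^↑(max(p−2k, ℓ−1)) = H^↑(p). (In the paper this shows that the peeling transition probabilities of the half-planar Boltzmann map conditioned on an infinite core sum to one, regardless of which exposed edge is peeled.) -/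
open scoped BigOperators

/-- `N = ν(ℤ_{<0}) = ∑_{k ≥ 1} ν(-k)`. -/
noncomputable def Nneg (ν : PMF ℤ) : ℝ := ∑' k : ℕ, (ν (-(k : ℤ) - 1)).toReal

/-- `H^↓(ℓ) = (1/N) ∑_{i ≥ ⌈ℓ/2⌉+1} ν(-i)` for `ℓ ≥ 0`, and `0` for `ℓ < 0`. -/
noncomputable def Hdown (ν : PMF ℤ) (ℓ : ℤ) : ℝ :=
  if 0 ≤ ℓ then
    (1 / Nneg ν) * ∑' i : ℕ, if (ℓ + 1) / 2 + 1 ≤ (i : ℤ) then (ν (-(i : ℤ))).toReal else 0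
  else 0

/-- `H^↑(ℓ) = ∑_{j=0}^{ℓ-1} H^↓(j)` for `ℓ ≥ 1`, and `0` for `ℓ ≤ 0`. -/
noncomputable def Hup (ν : PMF ℤ) (ℓ : ℤ) : ℝ :=
  if 1 ≤ ℓ then ∑ j ∈ Finset.range ℓ.toNat, Hdown ν (j : ℤ) else 0

/-- The measure `μ` on `ℤ`: `μ(2ℓ) = ν(ℓ)` for `ℓ ≥ 0`, `μ(-1) = N/2`,
`μ(-2ℓ) = ν(-ℓ)/2` for `ℓ ≥ 1`, and `μ = 0` elsewhere. -/
noncomputable def muStep (ν : PMF ℤ) (k : ℤ) : ℝ :=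
  if k = -1 then Nneg ν / 2
  else if 0 ≤ k ∧ 2 ∣ k then (ν (k / 2)).toReal
  else if k < 0 ∧ 2 ∣ k then (ν (k / 2)).toReal / 2
  else 0

/-!
Split the harmonic series at `p` by the parity of the jump. With
`T(m) = ∑_{k ≥ 1} ν(-k) H^↑(max(p - 2k, m))` (`clampedSum ν p m`), and since `H^↑` vanishes on
`ℤ_{≤0}`, harmonicity reads `H^↑(p) = ∑_{k ≥ 0} ν(k) H^↑(p + 2k) + ½ (T(p - 1) + T(0))`. So the
claim is `T(p - ℓ) + T(ℓ - 1) = T(p - 1) + T(0)`, which holds because the increments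
`T(m + 1) - T(m) = N H^↓(m) H^↓(p - 2 - m)` are symmetric under `m ↦ p - 2 - m`.
-/

section

variable (ν : PMF ℤ)

lemma summable_toReal_comp {f : ℕ → ℤ} (hf : Function.Injective f) :
    Summable fun k => (ν (f k)).toReal :=
  (ENNReal.summable_toReal ν.tsum_coe_ne_top).comp_injective hf

lemma summable_neg_sub_one : Summable fun k : ℕ => (ν (-(k : ℤ) - 1)).toReal :=
  summable_toReal_comp ν fun a b h => by omega

lemma Hdown_nonneg (ℓ : ℤ) : 0 ≤ Hdown ν ℓ := by
  have hN : 0 ≤ Nneg ν := tsum_nonneg fun _ => ENNReal.toReal_nonneg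
  unfold Hdown
  split_ifs
  · exact mul_nonneg (by positivity) (tsum_nonneg fun i => by split_ifs <;> positivity)
  · rfl

/-- With `i = k + 1`, the condition `i ≥ ⌈n/2⌉ + 1` of the definition reads `n ≤ 2k`. -/
lemma Nneg_mul_Hdown (hN : 0 < Nneg ν) {n : ℤ} (hn : 0 ≤ n) :
    Nneg ν * Hdown ν n = ∑' k : ℕ, if n ≤ 2 * k then (ν (-(k : ℤ) - 1)).toReal else 0 := by
  have hsum : Summable fun i : ℕ =>
      if (n + 1) / 2 + 1 ≤ (i : ℤ) then (ν (-(i : ℤ))).toReal else 0 :=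
    (summable_toReal_comp ν (f := fun i : ℕ => -(i : ℤ)) fun a b h => by simpa using h
      ).of_nonneg_of_le (fun _ => by split_ifs <;> positivity) (fun _ => by split_ifs <;> simp)
  rw [Hdown, if_pos hn, ← mul_assoc, mul_one_div_cancel hN.ne', one_mul,
    hsum.tsum_eq_zero_add, if_neg (by omega), zero_add]
  refine tsum_congr fun k => ?_
  simp only [Nat.cast_add, Nat.cast_one, neg_add, ← sub_eq_add_neg]
  exact if_congr (by omega) rfl rfl

lemma Hdown_zero (hN : 0 < Nneg ν) : Hdown ν 0 = 1 := by
  refine mul_left_cancel₀ hN.ne' ?_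
  rw [Nneg_mul_Hdown ν hN le_rfl, mul_one, Nneg]
  exact tsum_congr fun k => if_pos (by positivity)

lemma Hup_of_nonpos {ℓ : ℤ} (h : ℓ ≤ 0) : Hup ν ℓ = 0 :=
  if_neg (by omega)

lemma Hup_add_one {m : ℤ} (hm : 0 ≤ m) : Hup ν (m + 1) = Hup ν m + Hdown ν m := by
  rw [Hup, if_pos (by omega), show (m + 1).toNat = m.toNat + 1 by omega, Finset.sum_range_succ,
    Int.toNat_of_nonneg hm]
  rcases hm.eq_or_lt with rfl | hm
  · simp [Hup]
  · rw [Hup, if_pos (show 1 ≤ m by omega)]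

lemma Hup_monotone : Monotone (Hup ν) := by
  intro a b hab
  unfold Hup
  split_ifs with ha hb hb
  · exact Finset.sum_le_sum_of_subset_of_nonneg (Finset.range_subset_range.2 (by omega))
      fun j _ _ => Hdown_nonneg ν _
  · omega
  · exact Finset.sum_nonneg fun j _ => Hdown_nonneg ν _
  · rfl

lemma Hup_nonneg (ℓ : ℤ) : 0 ≤ Hup ν ℓ := by
  unfold Hup
  split_ifs
  · exact Finset.sum_nonneg fun j _ => Hdown_nonneg ν _
  · rfl

lemma one_le_Hup (hN : 0 < Nneg ν) {p : ℤ} (hp : 1 ≤ p) : 1 ≤ Hup ν p := by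
  have h1 : Hup ν 1 = 1 := by
    rw [show (1 : ℤ) = 0 + 1 by rfl, Hup_add_one ν le_rfl, Hup_of_nonpos ν le_rfl, Hdown_zero ν hN,
      zero_add]
  exact h1 ▸ Hup_monotone ν hp

lemma muStep_of_eq_two_mul {k : ℤ} (m : ℕ) (hk : k = 2 * m) : muStep ν k = (ν m).toReal := by
  rw [muStep, if_neg (by omega), if_pos ⟨by omega, ⟨m, hk⟩⟩, hk,
    Int.mul_ediv_cancel_left _ two_ne_zero]

lemma muStep_of_eq_neg_two_mul {k : ℤ} (m : ℕ) (hk : k = -(2 * (m + 1))) :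
    muStep ν k = (ν (-(m : ℤ) - 1)).toReal / 2 := by
  rw [muStep, if_neg (by omega), if_neg (by omega), if_pos ⟨by omega, ⟨-(m + 1), by omega⟩⟩,
    show k / 2 = -(m : ℤ) - 1 by omega]

lemma muStep_of_odd {k : ℤ} (hk : k ≠ -1) (hodd : ¬ 2 ∣ k) : muStep ν k = 0 := by
  rw [muStep, if_neg hk, if_neg fun h => hodd h.2, if_neg fun h => hodd h.2]

lemma tsum_muStep_mul {g : ℤ → ℝ} (hg : Summable fun k => muStep ν k * g k) :
    ∑' k, muStep ν k * g k = ∑' m : ℕ, (ν m).toReal * g (2 * m) + Nneg ν / 2 * g (-1)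
      + 1 / 2 * ∑' m : ℕ, (ν (-(m : ℤ) - 1)).toReal * g (-(2 * (m + 1))) := by
  set f := fun k => muStep ν k * g k
  have hpart {i : ℕ → ℤ} (hi : i.Injective) {u : ℕ → ℝ} (hu : ∀ m, f (i m) = u m) :
      HasSum (fun m => f (i m)) (∑' m, u m) := by
    simp only [hu]
    exact ((hg.comp_injective hi).congr hu).hasSum
  have hzero {i : ℕ → ℤ} (hi : ∀ m, i m ≠ -1 ∧ ¬ 2 ∣ i m) : HasSum (fun m => f (i m)) 0 := by
    simp [f, muStep_of_odd ν (hi _).1 (hi _).2]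
  have hnonneg := HasSum.even_add_odd (f := fun n : ℕ => f n)
    (hpart (i := fun m => ((2 * m : ℕ) : ℤ)) (fun a b h => by simpa using h)
      (u := fun m => (ν m).toReal * g (2 * m))
      (fun m => by simp only [f, Nat.cast_mul, Nat.cast_ofNat, muStep_of_eq_two_mul ν m rfl]))
    (hzero fun m => ⟨by omega, by omega⟩)
  have hneg := HasSum.even_add_odd (f := fun n : ℕ => f (-(n + 1)))
    (hasSum_single 0 fun m hm => by
      simp only [f, muStep_of_odd ν (k := -(((2 * m : ℕ) : ℤ) + 1)) (by omega) (by omega),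
        zero_mul])
    (hpart (i := fun m => -(((2 * m + 1 : ℕ) : ℤ) + 1)) (fun a b h => by simpa using h)
      (u := fun m => 1 / 2 * ((ν (-(m : ℤ) - 1)).toReal * g (-(2 * (m + 1)))))
      (fun m => by
        rw [show -(((2 * m + 1 : ℕ) : ℤ) + 1) = -(2 * (m + 1)) by push_cast; ring]
        simp only [f, muStep_of_eq_neg_two_mul ν m rfl]
        ring))
  rw [(hnonneg.of_nat_of_neg_add_one hneg).tsum_eq, tsum_mul_left, add_zero, ← add_assoc]
  simp [f, muStep]

noncomputable def clampedSum (p m : ℤ) : ℝ :=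
  ∑' k : ℕ, (ν (-(k : ℤ) - 1)).toReal * Hup ν (max (p - 2 * ((k : ℤ) + 1)) m)

lemma summable_clampedSum {p m : ℤ} (hm : m ≤ p) :
    Summable fun k : ℕ => (ν (-(k : ℤ) - 1)).toReal * Hup ν (max (p - 2 * ((k : ℤ) + 1)) m) :=
  ((summable_neg_sub_one ν).mul_right (Hup ν p)).of_nonneg_of_le
    (fun _ => mul_nonneg ENNReal.toReal_nonneg (Hup_nonneg ν _))
    (fun _ => mul_le_mul_of_nonneg_left (Hup_monotone ν (by omega)) ENNReal.toReal_nonneg)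

lemma clampedSum_zero (p : ℤ) :
    clampedSum ν p 0 = ∑' k : ℕ, (ν (-(k : ℤ) - 1)).toReal * Hup ν (p - 2 * ((k : ℤ) + 1)) :=
  tsum_congr fun k => by
    rcases le_total (p - 2 * ((k : ℤ) + 1)) 0 with h | h
    · rw [max_eq_right h, Hup_of_nonpos ν h, Hup_of_nonpos ν le_rfl]
    · rw [max_eq_left h]

lemma clampedSum_of_le {p m : ℤ} (h : p - 2 ≤ m) : clampedSum ν p m = Nneg ν * Hup ν m := by
  rw [clampedSum, Nneg, ← tsum_mul_right]
  exact tsum_congr fun k => by rw [max_eq_right (by omega)]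

/-- Raising the clamp from `m` to `m + 1` changes exactly the terms with `p - 2(k+1) ≤ m`, each
by `H^↓(m)`, and their total weight is `N H^↓(p - m - 2)`. -/
lemma clampedSum_add_one (hN : 0 < Nneg ν) {p m : ℤ} (hm : 0 ≤ m) (hmp : m + 2 ≤ p) :
    clampedSum ν p (m + 1) = clampedSum ν p m + Nneg ν * (Hdown ν m * Hdown ν (p - m - 2)) := by
  have hterm : ∀ k : ℕ,
      (ν (-(k : ℤ) - 1)).toReal * Hup ν (max (p - 2 * ((k : ℤ) + 1)) (m + 1))
        = (ν (-(k : ℤ) - 1)).toReal * Hup ν (max (p - 2 * ((k : ℤ) + 1)) m)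
          + Hdown ν m * if p - m - 2 ≤ 2 * (k : ℤ) then (ν (-(k : ℤ) - 1)).toReal else 0 := by
    intro k
    split_ifs with hk
    · rw [max_eq_right (by omega), max_eq_right (by omega), Hup_add_one ν hm]
      ring
    · rw [max_eq_left (by omega), max_eq_left (by omega)]
      ring
  have hweight : Summable fun k : ℕ =>
      if p - m - 2 ≤ 2 * (k : ℤ) then (ν (-(k : ℤ) - 1)).toReal else 0 :=
    (summable_neg_sub_one ν).of_nonneg_of_le (fun _ => by split_ifs <;> positivity)
      (fun _ => by split_ifs <;> simp)
  rw [clampedSum, tsum_congr hterm,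
    (summable_clampedSum ν (by omega)).tsum_add (hweight.mul_left _), tsum_mul_left,
    ← Nneg_mul_Hdown ν hN (by omega), clampedSum]
  ring

lemma clampedSum_symm (hN : 0 < Nneg ν) {p ℓ : ℤ} (hℓ : 1 ≤ ℓ) (hℓp : ℓ ≤ p) :
    clampedSum ν p (p - ℓ) + clampedSum ν p (ℓ - 1)
      = clampedSum ν p (p - 1) + clampedSum ν p 0 := by
  induction ℓ, hℓ using Int.leInduction with
  | base => rw [sub_self]
  | succ ℓ hℓ ih =>
    have hlow := clampedSum_add_one ν hN (p := p) (m := ℓ - 1) (by omega) (by omega)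
    have hhigh := clampedSum_add_one ν hN (p := p) (m := p - ℓ - 1) (by omega) (by omega)
    rw [sub_add_cancel, show p - (ℓ - 1) - 2 = p - ℓ - 1 by ring] at hlow
    rw [sub_add_cancel, show p - (p - ℓ - 1) - 2 = ℓ - 1 by ring] at hhigh
    rw [show p - (ℓ + 1) = p - ℓ - 1 by ring, add_sub_cancel_right]
    linear_combination hlow - hhigh + ih (by omega)

end

/-- The peeling transition probabilities of the half-planar Boltzmann map conditioned
on an infinite core sum to one, regardless of which exposed edge `ℓ` is peeled:
assuming `H^↑` is `μ`-harmonic on the positive integers, for `1 ≤ ℓ ≤ p`,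
`∑_{k≥0} ν(k) H^↑(p+2k) + ½∑_{k≥1} ν(-k) H^↑(max(p-2k, p-ℓ))
  + ½∑_{k≥1} ν(-k) H^↑(max(p-2k, ℓ-1)) = H^↑(p)`. -/
theorem peeling_transitions_sum_to_one
    (ν : PMF ℤ) (hN : 0 < Nneg ν)
    (hharm : ∀ p : ℤ, 1 ≤ p → Hup ν p = ∑' k : ℤ, muStep ν k * Hup ν (p + k)) :
    ∀ p ℓ : ℤ, 1 ≤ p → 1 ≤ ℓ → ℓ ≤ p →
      (∑' k : ℕ, (ν (k : ℤ)).toReal * Hup ν (p + 2 * k))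
        + (1 / 2) * (∑' k : ℕ,
            (ν (-(k : ℤ) - 1)).toReal * Hup ν (max (p - 2 * ((k : ℤ) + 1)) (p - ℓ)))
        + (1 / 2) * (∑' k : ℕ,
            (ν (-(k : ℤ) - 1)).toReal * Hup ν (max (p - 2 * ((k : ℤ) + 1)) (ℓ - 1)))
      = Hup ν p := by
  intro p ℓ hp hℓ hℓp
  have hH := hharm p hp
  -- `H^↑(p) ≥ 1`, so the harmonic series is not the junk value `0` of a divergent `tsum`
  have hsum : Summable fun k => muStep ν k * Hup ν (p + k) := by
    by_contra hdiv
    rw [tsum_eq_zero_of_not_summable hdiv] at hH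
    linarith [one_le_Hup ν hN hp]
  rw [tsum_muStep_mul ν hsum] at hH
  simp only [← sub_eq_add_neg] at hH
  have hsymm := clampedSum_symm ν hN hℓ hℓp
  rw [clampedSum_of_le ν (m := p - 1) (by omega), clampedSum_zero] at hsymm
  change _ + 1 / 2 * clampedSum ν p (p - ℓ) + 1 / 2 * clampedSum ν p (ℓ - 1) = _
  linarith
end

section
/- Let ν be a probability mass function on ℤ with ν(−1) > 0 that satisfies Tutte's equation ν(−ℓ−1) = (1/2) · ∑_{k∈ℤ} ν(k) · ν(−ℓ−k−1) for every integer ℓ ≥ 1, and assume ∑_{k=1}^∞ ν(k−1) · ∑_{ℓ=0}^{k−1} ν(−ℓ−1) < ∞. Then (1/ν(−1)) · ∑_{k=1}^∞ ν(k−1) · ∑_{ℓ=0}^{k−1} ν(−ℓ−1) = 1 − ( ∑_{ℓ=1}^∞ ν(−ℓ) )² / ( 2 ν(−1) ). (In the paper the left-hand side equals the probability P(Ĝ_l = 0) that a simple peeling step in the half-planar Boltzmann map with simple boundary swallows no boundary edge on the left.) -/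
/-!
Work in `ℝ≥0∞`, where every series converges and can be rearranged freely. Write
`T = ∑_{n ≥ 0} ν(-n-1)` for the mass of the negative integers, `S` for the double series of the
statement and `E = ∑_{k ≥ 0} ν(k) ν((-∞, -k-2])`. Summed over `ℓ ≥ 1`, Tutte's equation reads
`2 (T - ν(-1)) = ∑_{a + b ≤ -2} ν(a) ν(b)`. Pairs with both entries negative contribute `T²`, and
pairs with exactly one nonnegative entry contribute `E` for each of the two possible orders, so
`2 (T - ν(-1)) = T² + 2E`. As `S + E = ∑_{k ≥ 0} ν(k) T = (1 - T) T`, this gives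
`2S + T² = 2ν(-1)`.
-/

open ENNReal Finset

namespace ENNReal

theorem tsum_sum_range_eq_tsum_tsum (g : ℕ → ℕ → ℝ≥0∞) :
    ∑' n, ∑ i ∈ range n, g i n = ∑' i, ∑' j, g i (i + j + 1) := by
  have hrange : ∀ n, ∑ i ∈ range n, g i n = ∑' i, if i < n then g i n else 0 := fun n => by
    rw [tsum_eq_sum (s := range n) fun i hi => by simp [mem_range.not.mp hi]]
    exact sum_congr rfl fun i hi => by simp [mem_range.mp hi]
  simp_rw [hrange]
  rw [ENNReal.tsum_comm]
  refine tsum_congr fun i => ?_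
  rw [← Summable.sum_add_tsum_nat_add' (k := i + 1) ENNReal.summable,
    sum_eq_zero fun n hn => if_neg (by simp at hn; omega), zero_add]
  refine tsum_congr fun j => ?_
  rw [if_pos (by omega)]
  ring_nf

variable (f : ℤ → ℝ≥0∞)

theorem tsum_int_eq_tsum_nat_add_tsum_neg :
    ∑' k : ℤ, f k = ∑' n : ℕ, f n + ∑' n : ℕ, f (-n - 1) := by
  rw [← tsum_nat_add_neg_add_one ENNReal.summable, ENNReal.tsum_add]
  simp only [neg_add']

theorem tsum_neg_eq_sum_range_add_tsum (k : ℕ) :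
    ∑' n : ℕ, f (-n - 1) = ∑ ℓ ∈ range k, f (-ℓ - 1) + ∑' n : ℕ, f (-n - k - 1) := by
  rw [← Summable.sum_add_tsum_nat_add' (f := fun n : ℕ => f (-n - 1)) (k := k) ENNReal.summable]
  congr! 3 with n
  congr 1
  push_cast
  ring

theorem tsum_sub_eq_sum_range_add_tsum_neg (n : ℕ) :
    ∑' j : ℕ, f (n - j - 1) = ∑ i ∈ range n, f i + ∑' j : ℕ, f (-j - 1) := by
  rw [← Summable.sum_add_tsum_nat_add' (f := fun j : ℕ => f (n - j - 1)) (k := n)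
    ENNReal.summable, ← sum_range_reflect]
  congr! 3 with i hi j
  · rw [mem_range] at hi
    omega
  · congr 1
    push_cast
    ring

theorem tsum_neg_mul_sum_range_eq_tsum_mul_tsum :
    ∑' n : ℕ, f (-n - 1) * ∑ i ∈ range n, f i = ∑' k : ℕ, f k * ∑' n : ℕ, f (-n - k - 2) := by
  simp_rw [mul_sum, tsum_sum_range_eq_tsum_tsum]
  refine tsum_congr fun k => ?_
  rw [← ENNReal.tsum_mul_left]
  refine tsum_congr fun n => ?_
  rw [mul_comm]
  congr 2
  push_cast
  ring

theorem tsum_tsum_mul_neg_sub_two_eq :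
    ∑' ℓ : ℕ, ∑' k : ℤ, f k * f (-ℓ - k - 2) =
      2 * ∑' k : ℕ, f k * ∑' n : ℕ, f (-n - k - 2) + (∑' n : ℕ, f (-n - 1)) ^ 2 := by
  calc ∑' ℓ : ℕ, ∑' k : ℤ, f k * f (-ℓ - k - 2)
      = ∑' k : ℤ, f k * ∑' ℓ : ℕ, f (-ℓ - k - 2) := by
        rw [ENNReal.tsum_comm]
        simp_rw [ENNReal.tsum_mul_left]
    _ = ∑' k : ℕ, f k * ∑' ℓ : ℕ, f (-ℓ - k - 2)
          + ∑' n : ℕ, f (-n - 1) * ∑' ℓ : ℕ, f (n - ℓ - 1) := by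
        rw [tsum_int_eq_tsum_nat_add_tsum_neg]
        congr! 7
        ring
    _ = ∑' k : ℕ, f k * ∑' ℓ : ℕ, f (-ℓ - k - 2)
          + ∑' n : ℕ, f (-n - 1) * (∑ i ∈ range n, f i + ∑' j : ℕ, f (-j - 1)) := by
        simp_rw [tsum_sub_eq_sum_range_add_tsum_neg]
    _ = 2 * ∑' k : ℕ, f k * ∑' n : ℕ, f (-n - k - 2) + (∑' n : ℕ, f (-n - 1)) ^ 2 := by
        simp_rw [mul_add]
        rw [ENNReal.tsum_add, ENNReal.tsum_mul_right, tsum_neg_mul_sum_range_eq_tsum_mul_tsum]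
        ring

theorem tsum_mul_sum_range_add_tsum_mul_tsum_eq :
    ∑' k : ℕ, f k * ∑ ℓ ∈ range (k + 1), f (-ℓ - 1) + ∑' k : ℕ, f k * ∑' n : ℕ, f (-n - k - 2)
      = (∑' k : ℕ, f k) * ∑' n : ℕ, f (-n - 1) := by
  rw [← ENNReal.tsum_add, ← ENNReal.tsum_mul_right]
  refine tsum_congr fun k => ?_
  rw [← mul_add, tsum_neg_eq_sum_range_add_tsum f (k + 1)]
  congr 3 with n
  congr 1
  push_cast
  ring

end ENNReal

namespace PMF

theorem eq_tsum_mul_of_toReal_eq {α : Type*} (p : PMF α) {c : ℝ≥0∞} {w : α → ℝ≥0∞}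
    (hc : c ≠ ∞) (hw : ∀ a, w a ≤ 1) (h : c.toReal = ∑' a, (p a).toReal * (w a).toReal) :
    c = ∑' a, p a * w a := by
  have hw_ne_top a : w a ≠ ∞ := ne_top_of_le_ne_top one_ne_top (hw a)
  have hsum_le : ∑' a, p a * w a ≤ 1 :=
    calc ∑' a, p a * w a ≤ ∑' a, p a * 1 := ENNReal.tsum_le_tsum fun a => by gcongr; exact hw a
      _ = 1 := by simp [p.tsum_coe]
  rw [← ENNReal.toReal_eq_toReal_iff' hc (ne_top_of_le_ne_top one_ne_top hsum_le), h,
    ENNReal.tsum_toReal_eq fun a => ENNReal.mul_ne_top (p.apply_ne_top a) (hw_ne_top a)]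
  simp only [ENNReal.toReal_mul]

theorem two_mul_tsum_mul_sum_range_add_sq (ν : PMF ℤ)
    (htutte : ∀ ℓ : ℕ, 2 * ν (-ℓ - 2) = ∑' k, ν k * ν (-ℓ - k - 2)) :
    2 * ∑' k : ℕ, ν k * ∑ ℓ ∈ range (k + 1), ν (-ℓ - 1) + (∑' n : ℕ, ν (-n - 1)) ^ 2
      = 2 * ν (-1) := by
  set S := ∑' k : ℕ, ν k * ∑ ℓ ∈ range (k + 1), ν (-ℓ - 1)
  set E := ∑' k : ℕ, ν k * ∑' n : ℕ, ν (-n - k - 2)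
  set P := ∑' n : ℕ, ν n
  set T := ∑' n : ℕ, ν (-n - 1)
  set U := ∑' n : ℕ, ν (-n - 2)
  have hPT : P + T = 1 := by rw [← tsum_int_eq_tsum_nat_add_tsum_neg, ν.tsum_coe]
  have hTU : T = ν (-1) + U := by
    simpa [U, sub_sub, add_comm] using tsum_neg_eq_sum_range_add_tsum ν 1
  have hUE : 2 * U = 2 * E + T ^ 2 := by
    rw [← ENNReal.tsum_mul_left, tsum_congr htutte, tsum_tsum_mul_neg_sub_two_eq]
  have hSE : S + E = P * T := tsum_mul_sum_range_add_tsum_mul_tsum_eq ν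
  have hU_ne_top : 2 * U ≠ ∞ := by
    have hU_le : U ≤ 1 :=
      calc U ≤ T := hTU ▸ le_add_self
        _ ≤ 1 := hPT ▸ le_add_self
    exact ENNReal.mul_ne_top ofNat_ne_top (ne_top_of_le_ne_top one_ne_top hU_le)
  refine (ENNReal.add_left_inj hU_ne_top).1 ?_
  calc 2 * S + T ^ 2 + 2 * U = 2 * (S + E) + 2 * T ^ 2 := by rw [hUE]; ring
    _ = 2 * T * (P + T) := by rw [hSE]; ring
    _ = 2 * ν (-1) + 2 * U := by rw [hPT, hTU]; ring

end PMF

theorem simple_gulp_zero_probability_general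
    (ν : PMF ℤ) (hpos : 0 < ν (-1))
    (htutte : ∀ ℓ : ℤ, 1 ≤ ℓ →
      (ν (-ℓ - 1)).toReal = (1 / 2) * ∑' k : ℤ, (ν k).toReal * (ν (-ℓ - k - 1)).toReal) :
    (1 / (ν (-1)).toReal) *
        (∑' k : ℕ, (ν (k : ℤ)).toReal * ∑ ℓ ∈ Finset.range (k + 1), (ν (-(ℓ : ℤ) - 1)).toReal)
      = 1 - (∑' ℓ : ℕ, (ν (-(ℓ : ℤ) - 1)).toReal) ^ 2 / (2 * (ν (-1)).toReal) := by
  have htutte_ennreal (ℓ : ℕ) : 2 * ν (-ℓ - 2) = ∑' k, ν k * ν (-ℓ - k - 2) := by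
    refine ν.eq_tsum_mul_of_toReal_eq (ENNReal.mul_ne_top ofNat_ne_top (ν.apply_ne_top _))
      (fun _ => ν.coe_le_one _) ?_
    rw [ENNReal.toReal_mul, ENNReal.toReal_ofNat]
    convert congrArg (2 * ·) (htutte (ℓ + 1) (by omega)) using 1 <;> ring_nf
  have hkey := ν.two_mul_tsum_mul_sum_range_add_sq htutte_ennreal
  obtain ⟨hS, hT⟩ :=
    ENNReal.add_ne_top.1 (hkey.trans_ne (ENNReal.mul_ne_top ofNat_ne_top (ν.apply_ne_top _)))
  have hkey_real := congrArg ENNReal.toReal hkey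
  rw [ENNReal.toReal_add hS hT, ENNReal.toReal_mul, ENNReal.toReal_pow,
    ENNReal.tsum_toReal_eq fun _ => ENNReal.mul_ne_top (ν.apply_ne_top _)
      (ENNReal.sum_ne_top.2 fun _ _ => ν.apply_ne_top _),
    ENNReal.tsum_toReal_eq fun _ => ν.apply_ne_top _] at hkey_real
  simp only [ENNReal.toReal_mul, ENNReal.toReal_sum fun _ _ => ν.apply_ne_top _,
    ENNReal.toReal_ofNat] at hkey_real
  have hpos_real : 0 < (ν (-1)).toReal := ENNReal.toReal_pos hpos.ne' (ν.apply_ne_top _)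
  field_simp
  linarith

/-- If `ν` is a probability mass function on `ℤ` with `ν(-1) > 0` satisfying Tutte's equation
`ν(-ℓ-1) = ½ ∑_{k∈ℤ} ν(k) ν(-ℓ-k-1)` for all `ℓ ≥ 1`, then
`(1/ν(-1)) ∑_{k≥1} ν(k-1) ∑_{ℓ=0}^{k-1} ν(-ℓ-1) = 1 - (∑_{ℓ≥1} ν(-ℓ))²/(2ν(-1))`.
(The left-hand side is the probability that a simple peeling step in the half-planar
Boltzmann map with simple boundary swallows no boundary edge on the left.) -/
theorem simple_gulp_zero_probability
    (ν : PMF ℤ) (hpos : 0 < ν (-1))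
    (htutte : ∀ ℓ : ℤ, 1 ≤ ℓ →
      (ν (-ℓ - 1)).toReal = (1 / 2) * ∑' k : ℤ, (ν k).toReal * (ν (-ℓ - k - 1)).toReal)
    (hsum : Summable (fun k : ℕ =>
      (ν (k : ℤ)).toReal * ∑ ℓ ∈ Finset.range (k + 1), (ν (-(ℓ : ℤ) - 1)).toReal)) :
    (1 / (ν (-1)).toReal) *
        (∑' k : ℕ, (ν (k : ℤ)).toReal * ∑ ℓ ∈ Finset.range (k + 1), (ν (-(ℓ : ℤ) - 1)).toReal)
      = 1 - (∑' ℓ : ℕ, (ν (-(ℓ : ℤ) - 1)).toReal) ^ 2 / (2 * (ν (-1)).toReal) :=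
  simple_gulp_zero_probability_general ν hpos htutte
end

section
/- Let μ be a probability mass function on ℤ and let (R_n)_{n≥0} be a random walk started from an integer k ≥ 1 with i.i.d. increments of law μ, and suppose limsup_n R_n = +∞ almost surely. Let h : ℤ → [0,∞) be bounded, with h(x) = 0 for all x < 0, h(x) → 0 as x → +∞, and h μ-harmonic on the positive integers, i.e. h(x) = ∑_{y∈ℤ} μ(y) h(x+y) for every x ≥ 1. Let τ = inf{ n ≥ 0 : R_n ≤ 0 }. Then h(k) = h(0) · P( τ < ∞ and R_τ = 0 ). -/
/-!
Stop the walk `R` when it first leaves `[1, M)`. Harmonicity of `h` on the positive integers and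
independence of the increments make `h (R n)` a martingale up to that exit, so for every `N`
`h k = E[h (R N); no exit before N] + ∑_{n < N} E[h (R n); exit at n]`.
At an exit the walk is either `≤ 0`, where `h` vanishes except at `0`, or `≥ M`, where `h ≤ ε` once
`M` is large; and since the walk is a.s. unbounded above, the first term tends to `0` as `N → ∞`.
This gives `h k ≤ h 0 · p + ε`, where `p` is the probability that the first visit to `(-∞, 0]` is
at `0`. Dropping the nonnegative terms instead and letting `M = N → ∞` gives `h 0 · p ≤ h k`.
-/

open MeasureTheory ProbabilityTheory Filter Topology Function

section Independence

variable {Ω α β : Type*} [MeasurableSpace α] [MeasurableSpace β]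

theorem ProbabilityTheory.IndepFun.integral_comp_eq_integral_integral [MeasurableSpace Ω]
    {P : Measure Ω} [IsProbabilityMeasure P]
    {T : Ω → α} {Y : Ω → β} (hT : Measurable T) (hY : Measurable Y) (hTY : IndepFun T Y P)
    {F : α → β → ℝ} (hF : Measurable (uncurry F)) {C : ℝ} (hFC : ∀ a b, |F a b| ≤ C) :
    ∫ ω, F (T ω) (Y ω) ∂P = ∫ ω, ∫ y, F (T ω) y ∂(P.map Y) ∂P := by
  have hmap : P.map (fun ω => (T ω, Y ω)) = (P.map T).prod (P.map Y) :=
    (indepFun_iff_map_prod_eq_prod_map_map hT.aemeasurable hY.aemeasurable).1 hTY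
  have : IsProbabilityMeasure (P.map T) := Measure.isProbabilityMeasure_map hT.aemeasurable
  have : IsProbabilityMeasure (P.map Y) := Measure.isProbabilityMeasure_map hY.aemeasurable
  have hFint : Integrable (uncurry F) ((P.map T).prod (P.map Y)) :=
    .of_bound hF.aestronglyMeasurable C (.of_forall fun p => hFC p.1 p.2)
  calc ∫ ω, F (T ω) (Y ω) ∂P
      = ∫ p, uncurry F p ∂(P.map fun ω => (T ω, Y ω)) :=
        (integral_map (hT.prodMk hY).aemeasurable hF.aestronglyMeasurable).symm
    _ = ∫ t, ∫ y, F t y ∂(P.map Y) ∂(P.map T) := by rw [hmap, integral_prod _ hFint]; rfl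
    _ = ∫ ω, ∫ y, F (T ω) y ∂(P.map Y) ∂P :=
        integral_map hT.aemeasurable hF.stronglyMeasurable.integral_prod_right'.aestronglyMeasurable

/-- The σ-algebra `σ(X 0, …, X (n - 1))`, strictly before time `n`. -/
abbrev pastMeasurableSpace (X : ℕ → Ω → β) (n : ℕ) : MeasurableSpace Ω :=
  ⨆ j < n, MeasurableSpace.comap (X j) inferInstance

theorem measurable_pastMeasurableSpace {X : ℕ → Ω → β} {j n : ℕ} (hj : j < n) :
    Measurable[pastMeasurableSpace X n] (X j) :=
  measurable_iff_comap_le.2 <| le_iSup₂ (f := fun j _ => MeasurableSpace.comap (X j) _) j hj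

theorem ProbabilityTheory.iIndepFun.indepFun_of_measurable_past [MeasurableSpace Ω]
    {P : Measure Ω} {X : ℕ → Ω → β}
    (hX : ∀ i, Measurable (X i)) (hiid : iIndepFun X P) {n : ℕ} {T : Ω → α}
    (hT : Measurable[pastMeasurableSpace X n] T) : IndepFun T (X n) P := by
  have hindep := indep_iSup_of_disjoint (fun i => (hX i).comap_le)
    ((iIndepFun_iff_iIndep _ X P).1 hiid) (S := {j | j < n}) (T := {n}) (by simp)
  simp only [Set.mem_singleton_iff, iSup_iSup_eq_left] at hindep
  exact (IndepFun_iff_Indep _ _ _).2 (indep_of_indep_of_le_left hindep hT.comap_le)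

end Independence

section StayAndExit

variable {Ω γ : Type*}

def staysIn (R : ℕ → Ω → γ) (s : Set γ) (n : ℕ) : Set Ω :=
  {ω | ∀ j < n, R j ω ∈ s}

def exitsAt (R : ℕ → Ω → γ) (s : Set γ) (n : ℕ) : Set Ω :=
  staysIn R s n ∩ {ω | R n ω ∉ s}

variable (R : ℕ → Ω → γ) (s : Set γ)

theorem staysIn_zero : staysIn R s 0 = Set.univ := by
  simp [staysIn]

theorem staysIn_succ (n : ℕ) : staysIn R s (n + 1) = staysIn R s n ∩ {ω | R n ω ∈ s} := by
  ext ω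
  simp only [staysIn, Set.mem_inter_iff, Set.mem_ofPred_eq, Nat.lt_add_one_iff_lt_or_eq, or_imp,
    forall_and, forall_eq]

theorem staysIn_antitone : Antitone (staysIn R s) :=
  fun _ _ hmn _ hω j hj => hω j (hj.trans_le hmn)

theorem staysIn_diff_staysIn_succ (n : ℕ) :
    staysIn R s n \ staysIn R s (n + 1) = exitsAt R s n := by
  rw [staysIn_succ, Set.sdiff_self_inter]
  rfl

theorem pairwise_disjoint_exitsAt : Pairwise (Disjoint on (exitsAt R s)) :=
  pairwise_disjoint_on _ |>.2 fun _ _ hmn =>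
    Set.disjoint_left.2 fun _ hm hn => hm.2 (hn.1 _ hmn)

variable {R s}

theorem exitsAt_inter_subset {t : Set γ} (hst : s ⊆ t) {x : γ} (hx : x ∉ t) (n : ℕ) :
    exitsAt R s n ∩ {ω | R n ω = x} ⊆ exitsAt R t n ∩ {ω | R n ω = x} :=
  fun ω ⟨⟨hstay, _⟩, (hxn : R n ω = x)⟩ =>
    ⟨⟨fun j hj => hst (hstay j hj), show R n ω ∉ t from hxn ▸ hx⟩, hxn⟩

theorem measurableSet_staysIn [MeasurableSpace γ] {m : MeasurableSpace Ω} {n : ℕ}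
    (hR : ∀ j < n, Measurable[m] (R j)) (hs : MeasurableSet s) :
    MeasurableSet[m] (staysIn R s n) := by
  induction n with
  | zero => simp [staysIn_zero]
  | succ n ih =>
    rw [staysIn_succ]
    exact (ih fun j hj => hR j (hj.trans n.lt_succ_self)).inter (hR n n.lt_succ_self hs)

end StayAndExit

section RandomWalk

variable {Ω : Type*} {X : ℕ → Ω → ℤ} {k : ℤ}

def randomWalk (k : ℤ) (X : ℕ → Ω → ℤ) (n : ℕ) (ω : Ω) : ℤ :=
  k + ∑ i ∈ Finset.range n, X i ω

theorem randomWalk_succ (n : ℕ) (ω : Ω) :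
    randomWalk k X (n + 1) ω = randomWalk k X n ω + X n ω := by
  simp only [randomWalk, Finset.sum_range_succ, add_assoc]

theorem measurable_randomWalk {m : MeasurableSpace Ω} {n : ℕ}
    (hX : ∀ i < n, Measurable[m] (X i)) : Measurable[m] (randomWalk k X n) :=
  (Finset.measurable_sum _ fun i hi => hX i (Finset.mem_range.1 hi)).const_add k

theorem setOf_exists_eq_zero_eq_iUnion_exitsAt (R : ℕ → Ω → ℤ) :
    {ω | ∃ n, R n ω = 0 ∧ ∀ j < n, 1 ≤ R j ω}
      = ⋃ n, exitsAt R (Set.Ici 1) n ∩ {ω | R n ω = 0} := by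
  ext ω
  simp only [Set.mem_ofPred_eq, Set.mem_iUnion, exitsAt, staysIn, Set.mem_inter_iff, Set.mem_Ici]
  exact exists_congr fun n => ⟨fun ⟨h0, hpos⟩ => ⟨⟨hpos, by omega⟩, h0⟩,
    fun ⟨⟨hpos, _⟩, h0⟩ => ⟨h0, hpos⟩⟩

theorem exitsAt_Ico_inter_subset_iUnion (R : ℕ → Ω → ℤ) (M : ℤ) (n : ℕ) :
    exitsAt R (Set.Ico 1 M) n ∩ {ω | R n ω = 0}
      ⊆ ⋃ n, exitsAt R (Set.Ici 1) n ∩ {ω | R n ω = 0} :=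
  (exitsAt_inter_subset Set.Ico_subset_Ici_self (by simp) n).trans
    (Set.subset_iUnion (fun n => exitsAt R (Set.Ici 1) n ∩ {ω | R n ω = 0}) n)

theorem monotone_biUnion_exitsAt_Ico_inter (R : ℕ → Ω → ℤ) :
    Monotone fun m : ℕ => ⋃ n ∈ Finset.range m, exitsAt R (Set.Ico 1 m) n ∩ {ω | R n ω = 0} :=
  fun m m' hmm' =>
    Set.iUnion₂_subset fun n hn => Set.subset_iUnion₂_of_subset n (Finset.range_mono hmm' hn)
      (exitsAt_inter_subset (Set.Ico_subset_Ico_right (by exact_mod_cast hmm')) (by simp) n)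

theorem iUnion_biUnion_exitsAt_Ico_inter (R : ℕ → Ω → ℤ) :
    ⋃ m : ℕ, ⋃ n ∈ Finset.range m, exitsAt R (Set.Ico 1 m) n ∩ {ω | R n ω = 0}
      = ⋃ n, exitsAt R (Set.Ici 1) n ∩ {ω | R n ω = 0} := by
  refine subset_antisymm (Set.iUnion_subset fun m => Set.iUnion₂_subset fun n _ =>
    exitsAt_Ico_inter_subset_iUnion R m n) ?_
  refine Set.iUnion_subset fun n ω ⟨⟨hstay, _⟩, hzero⟩ => ?_
  obtain ⟨m, hnm, hbig⟩ : ∃ m : ℕ, n < m ∧ ∀ j ∈ Finset.range n, R j ω < m :=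
    ((eventually_gt_atTop n).and ((Finset.range n).eventually_all.2 fun j _ =>
      tendsto_natCast_atTop_atTop.eventually_gt_atTop (R j ω))).exists
  refine Set.mem_iUnion.2 ⟨m, Set.mem_biUnion (Finset.mem_range.2 hnm) ⟨⟨fun j hj =>
    ⟨hstay j hj, hbig j (Finset.mem_range.2 hj)⟩, by simp [show R n ω = 0 from hzero]⟩, hzero⟩⟩

variable [MeasurableSpace Ω] {P : Measure Ω} [IsProbabilityMeasure P] {μ : PMF ℤ} {h : ℤ → ℝ}
  {C : ℝ}

theorem integrable_comp_of_abs_le {Z : Ω → ℤ} (hZ : Measurable Z) (hC : ∀ x, |h x| ≤ C) :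
    Integrable (fun ω => h (Z ω)) P :=
  .of_bound ((measurable_of_countable h).comp hZ).aestronglyMeasurable C (.of_forall fun _ => hC _)

open Classical in
theorem setIntegral_comp_add_of_indepFun {Z Y : Ω → ℤ} {A : Set Ω} (hZ : Measurable Z)
    (hA : MeasurableSet A) (hY : Measurable Y) (hind : IndepFun (fun ω => (Z ω, ω ∈ A)) Y P)
    (hlaw : P.map Y = μ.toMeasure) (hC : ∀ x, |h x| ≤ C) :
    ∫ ω in A, h (Z ω + Y ω) ∂P = ∫ ω in A, ∑' y, (μ y).toReal * h (Z ω + y) ∂P := by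
  let F : ℤ × Prop → ℤ → ℝ := fun q y => if q.2 then h (q.1 + y) else 0
  have hFC : ∀ q y, |F q y| ≤ C := fun q y => by
    by_cases hq : q.2 <;> simp only [F, hq, if_true, if_false, abs_zero]
    exacts [hC _, (abs_nonneg _).trans (hC 0)]
  have hinner : ∀ q, ∫ y, F q y ∂μ.toMeasure
      = if q.2 then ∑' y, (μ y).toReal * h (q.1 + y) else 0 := by
    rintro ⟨z, p⟩
    by_cases hp : p
    · simp only [F, hp, if_true]
      exact PMF.integral_eq_tsum μ _ (integrable_comp_of_abs_le (measurable_const_add z) hC)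
    · simp [F, hp]
  rw [← integral_indicator hA, ← integral_indicator hA]
  calc ∫ ω, A.indicator (fun ω => h (Z ω + Y ω)) ω ∂P
      = ∫ ω, F (Z ω, ω ∈ A) (Y ω) ∂P := rfl
    _ = ∫ ω, ∫ y, F (Z ω, ω ∈ A) y ∂μ.toMeasure ∂P := by
        rw [← hlaw]
        exact hind.integral_comp_eq_integral_integral
          (hZ.prodMk (measurableSet_setOfPred.1 hA)) hY (measurable_of_countable _) hFC
    _ = ∫ ω, A.indicator (fun ω => ∑' y, (μ y).toReal * h (Z ω + y)) ω ∂P := by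
        congr 1 with ω
        simp [hinner, Set.indicator_apply]

theorem setIntegral_staysIn_succ_randomWalk (hX : ∀ i, Measurable (X i)) (hiid : iIndepFun X P)
    (hlaw : ∀ i, P.map (X i) = μ.toMeasure) (hC : ∀ x, |h x| ≤ C) {s : Set ℤ}
    (hharm : ∀ x ∈ s, h x = ∑' y, (μ y).toReal * h (x + y)) (n : ℕ) :
    ∫ ω in staysIn (randomWalk k X) s (n + 1), h (randomWalk k X (n + 1) ω) ∂P
      = ∫ ω in staysIn (randomWalk k X) s (n + 1), h (randomWalk k X n ω) ∂P := by
  set A := staysIn (randomWalk k X) s (n + 1)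
  have hpast : ∀ j ≤ n, Measurable[pastMeasurableSpace X n] (randomWalk k X j) := fun j hj =>
    measurable_randomWalk fun i hi => measurable_pastMeasurableSpace (hi.trans_le hj)
  have hApast : MeasurableSet[pastMeasurableSpace X n] A :=
    measurableSet_staysIn (fun j hj => hpast j (Nat.lt_succ_iff.1 hj)) .of_discrete
  have hA : MeasurableSet A :=
    measurableSet_staysIn (fun j _ => measurable_randomWalk fun i _ => hX i) .of_discrete
  have hind : IndepFun (fun ω => (randomWalk k X n ω, ω ∈ A)) (X n) P :=
    hiid.indepFun_of_measurable_past hX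
      ((hpast n le_rfl).prodMk ((@measurableSet_setOfPred Ω (pastMeasurableSpace X n) _).1 hApast))
  simp_rw [randomWalk_succ]
  rw [setIntegral_comp_add_of_indepFun (measurable_randomWalk fun i _ => hX i) hA (hX n) hind
    (hlaw n) hC]
  exact setIntegral_congr_fun hA fun ω hω => (hharm _ (hω n n.lt_succ_self)).symm

theorem eq_setIntegral_staysIn_add_sum_setIntegral_exitsAt (hX : ∀ i, Measurable (X i))
    (hiid : iIndepFun X P) (hlaw : ∀ i, P.map (X i) = μ.toMeasure) (hC : ∀ x, |h x| ≤ C)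
    {s : Set ℤ} (hharm : ∀ x ∈ s, h x = ∑' y, (μ y).toReal * h (x + y)) (N : ℕ) :
    h k = ∫ ω in staysIn (randomWalk k X) s N, h (randomWalk k X N ω) ∂P
      + ∑ n ∈ Finset.range N, ∫ ω in exitsAt (randomWalk k X) s n, h (randomWalk k X n ω) ∂P := by
  have hR : ∀ n, Measurable (randomWalk k X n) := fun n => measurable_randomWalk fun i _ => hX i
  induction N with
  | zero => simp [staysIn_zero, randomWalk]
  | succ N ih =>
    rw [ih, Finset.sum_range_succ, ← staysIn_diff_staysIn_succ,
      ← integral_inter_add_sdiff (measurableSet_staysIn (fun j _ => hR j) .of_discrete)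
        (integrable_comp_of_abs_le (hR N) hC).integrableOn,
      Set.inter_eq_right.2 (staysIn_antitone _ _ N.le_succ),
      setIntegral_staysIn_succ_randomWalk hX hiid hlaw hC hharm]
    ring

end RandomWalk

section ExitBounds

variable {Ω : Type*} [MeasurableSpace Ω] {P : Measure Ω} [IsProbabilityMeasure P]
  {μ : PMF ℤ} {X : ℕ → Ω → ℤ} {k : ℤ} {h : ℤ → ℝ} {C : ℝ}

theorem measurableSet_exitsAt {R : ℕ → Ω → ℤ} (hR : ∀ n, Measurable (R n)) (s : Set ℤ) (n : ℕ) :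
    MeasurableSet (exitsAt R s n) :=
  (measurableSet_staysIn (fun j _ => hR j) .of_discrete).inter
    (hR n (MeasurableSet.of_discrete (s := sᶜ)))

theorem measureReal_biUnion_exitsAt_inter {R : ℕ → Ω → ℤ} (hR : ∀ n, Measurable (R n))
    (s : Set ℤ) (x : ℤ) (N : ℕ) :
    P.real (⋃ n ∈ Finset.range N, exitsAt R s n ∩ {ω | R n ω = x})
      = ∑ n ∈ Finset.range N, P.real (exitsAt R s n ∩ {ω | R n ω = x}) :=
  measureReal_biUnion_finset
    (Set.PairwiseDisjoint.mono ((pairwise_disjoint_exitsAt R s).set_pairwise _)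
      fun _ => Set.inter_subset_left)
    fun n _ => (measurableSet_exitsAt hR s n).inter (hR n (measurableSet_singleton x))

theorem setIntegral_exitsAt_eq {R : ℕ → Ω → ℤ} (hR : ∀ n, Measurable (R n)) (hC : ∀ x, |h x| ≤ C)
    (s : Set ℤ) (n : ℕ) :
    ∫ ω in exitsAt R s n, h (R n ω) ∂P
      = h 0 * P.real (exitsAt R s n ∩ {ω | R n ω = 0})
        + ∫ ω in exitsAt R s n \ {ω | R n ω = 0}, h (R n ω) ∂P := by
  have hzero : MeasurableSet {ω | R n ω = 0} := hR n (measurableSet_singleton 0)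
  rw [← integral_inter_add_sdiff hzero (integrable_comp_of_abs_le (hR n) hC).integrableOn,
    setIntegral_congr_fun ((measurableSet_exitsAt hR s n).inter hzero) fun ω hω => by
      rw [show R n ω = 0 from hω.2], setIntegral_const, smul_eq_mul, mul_comm]

theorem setIntegral_exitsAt_Ico_le {R : ℕ → Ω → ℤ} (hR : ∀ n, Measurable (R n))
    (hC : ∀ x, |h x| ≤ C) (hzero : ∀ x < 0, h x = 0) {M : ℤ} {ε : ℝ} (hε : 0 ≤ ε)
    (hsmall : ∀ x, M ≤ x → h x ≤ ε) (n : ℕ) :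
    ∫ ω in exitsAt R (Set.Ico 1 M) n, h (R n ω) ∂P
      ≤ h 0 * P.real (exitsAt R (Set.Ico 1 M) n ∩ {ω | R n ω = 0})
        + ε * P.real (exitsAt R (Set.Ico 1 M) n) := by
  set E := exitsAt R (Set.Ico 1 M) n
  have hEZ : MeasurableSet (E \ {ω | R n ω = 0}) :=
    (measurableSet_exitsAt hR _ n).diff (hR n (measurableSet_singleton 0))
  have hle : ∀ ω ∈ E \ {ω | R n ω = 0}, h (R n ω) ≤ ε := by
    rintro ω ⟨⟨-, hout⟩, hne⟩
    simp only [Set.mem_ofPred_eq, Set.mem_Ico, not_and, not_lt] at hout hne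
    rcases lt_or_gt_of_ne hne with hneg | hpos
    · exact (hzero _ hneg).trans_le hε
    · exact hsmall _ (hout hpos)
  rw [setIntegral_exitsAt_eq hR hC]
  gcongr
  calc ∫ ω in E \ {ω | R n ω = 0}, h (R n ω) ∂P
      ≤ ∫ _ in E \ {ω | R n ω = 0}, ε ∂P :=
        setIntegral_mono_on (integrable_comp_of_abs_le (hR n) hC).integrableOn
          (integrableOn_const (measure_ne_top _ _)) hEZ hle
    _ ≤ ε * P.real E := by
        rw [setIntegral_const, smul_eq_mul, mul_comm]
        exact mul_le_mul_of_nonneg_left (measureReal_mono Set.sdiff_subset) hε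

theorem mul_measureReal_biUnion_exitsAt_zero_le (hX : ∀ i, Measurable (X i))
    (hiid : iIndepFun X P) (hlaw : ∀ i, P.map (X i) = μ.toMeasure) (hC : ∀ x, |h x| ≤ C)
    (hnonneg : ∀ x, 0 ≤ h x) {s : Set ℤ} (hharm : ∀ x ∈ s, h x = ∑' y, (μ y).toReal * h (x + y))
    (N : ℕ) :
    h 0 * P.real (⋃ n ∈ Finset.range N, exitsAt (randomWalk k X) s n ∩
      {ω | randomWalk k X n ω = 0}) ≤ h k := by
  have hR : ∀ n, Measurable (randomWalk k X n) := fun n => measurable_randomWalk fun i _ => hX i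
  rw [eq_setIntegral_staysIn_add_sum_setIntegral_exitsAt (P := P) (k := k) hX hiid hlaw hC hharm N,
    measureReal_biUnion_exitsAt_inter hR, Finset.mul_sum]
  apply le_add_of_nonneg_of_le (integral_nonneg fun _ => hnonneg _)
  refine Finset.sum_le_sum fun n _ => ?_
  rw [setIntegral_exitsAt_eq hR hC]
  exact le_add_of_nonneg_right (integral_nonneg fun _ => hnonneg _)

theorem le_mul_measureReal_biUnion_exitsAt_zero_add (hX : ∀ i, Measurable (X i))
    (hiid : iIndepFun X P) (hlaw : ∀ i, P.map (X i) = μ.toMeasure) (hC : ∀ x, |h x| ≤ C)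
    {M : ℤ} (hharm : ∀ x ∈ Set.Ico 1 M, h x = ∑' y, (μ y).toReal * h (x + y))
    (hzero : ∀ x < 0, h x = 0) {ε : ℝ} (hε : 0 ≤ ε) (hsmall : ∀ x, M ≤ x → h x ≤ ε) (N : ℕ) :
    h k ≤ C * P.real (staysIn (randomWalk k X) (Set.Ico 1 M) N)
      + h 0 * P.real (⋃ n ∈ Finset.range N, exitsAt (randomWalk k X) (Set.Ico 1 M) n ∩
          {ω | randomWalk k X n ω = 0}) + ε := by
  set R := randomWalk k X
  have hR : ∀ n, Measurable (R n) := fun n => measurable_randomWalk fun i _ => hX i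
  have hexit := fun n => setIntegral_exitsAt_Ico_le (P := P) hR hC hzero hε hsmall n
  have hstay : ∫ ω in staysIn R (Set.Ico 1 M) N, h (R N ω) ∂P
      ≤ C * P.real (staysIn R (Set.Ico 1 M) N) :=
    (Real.le_norm_self _).trans
      (norm_setIntegral_le_of_norm_le_const (measure_lt_top _ _) fun _ _ => hC _)
  have hsum : ∑ n ∈ Finset.range N, P.real (exitsAt R (Set.Ico 1 M) n) ≤ 1 := by
    rw [← measureReal_biUnion_finset
      ((pairwise_disjoint_exitsAt R _).set_pairwise _) fun n _ => measurableSet_exitsAt hR _ n]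
    exact measureReal_le_one
  rw [eq_setIntegral_staysIn_add_sum_setIntegral_exitsAt (P := P) (k := k) hX hiid hlaw hC hharm N,
    measureReal_biUnion_exitsAt_inter hR, Finset.mul_sum]
  calc _ ≤ C * P.real (staysIn R (Set.Ico 1 M) N) + ∑ n ∈ Finset.range N,
        (h 0 * P.real (exitsAt R (Set.Ico 1 M) n ∩ {ω | R n ω = 0})
          + ε * P.real (exitsAt R (Set.Ico 1 M) n)) :=
        add_le_add hstay (Finset.sum_le_sum fun n _ => hexit n)
    _ ≤ _ := by
        rw [Finset.sum_add_distrib, ← Finset.mul_sum, ← Finset.mul_sum]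
        linarith [mul_le_mul_of_nonneg_left hsum hε]

theorem tendsto_measureReal_staysIn_atTop {R : ℕ → Ω → ℤ} (hR : ∀ n, Measurable (R n))
    {s : Set ℤ} (hs : BddAbove s) (hunbdd : ∀ᵐ ω ∂P, ∀ M : ℤ, ∃ n, M ≤ R n ω) :
    Tendsto (fun N => P.real (staysIn R s N)) atTop (𝓝 0) := by
  obtain ⟨b, hb⟩ := hs
  have hnull : P (⋂ N, staysIn R s N) = 0 := by
    refine measure_mono_null ?_ (ae_iff.1 hunbdd)
    intro ω hω hunb
    obtain ⟨n, hn⟩ := hunb (b + 1)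
    have := hb (Set.mem_iInter.1 hω (n + 1) n n.lt_succ_self)
    omega
  have htend := tendsto_measure_iInter_atTop (μ := P)
    (fun N => (measurableSet_staysIn (fun j _ => hR j) .of_discrete).nullMeasurableSet)
    (staysIn_antitone R s) ⟨0, measure_ne_top P _⟩
  rw [hnull] at htend
  have := (ENNReal.tendsto_toReal ENNReal.zero_ne_top).comp htend
  rwa [ENNReal.toReal_zero] at this

theorem mul_measureReal_iUnion_exitsAt_zero_le (hX : ∀ i, Measurable (X i))
    (hiid : iIndepFun X P) (hlaw : ∀ i, P.map (X i) = μ.toMeasure) (hC : ∀ x, |h x| ≤ C)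
    (hnonneg : ∀ x, 0 ≤ h x) (hharm : ∀ x : ℤ, 1 ≤ x → h x = ∑' y, (μ y).toReal * h (x + y)) :
    h 0 * P.real (⋃ n, exitsAt (randomWalk k X) (Set.Ici 1) n ∩ {ω | randomWalk k X n ω = 0})
      ≤ h k := by
  set R := randomWalk k X
  have htend := tendsto_measure_iUnion_atTop (μ := P) (monotone_biUnion_exitsAt_Ico_inter R)
  rw [iUnion_biUnion_exitsAt_Ico_inter] at htend
  exact le_of_tendsto' (((ENNReal.tendsto_toReal (measure_ne_top _ _)).comp htend).const_mul (h 0))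
    fun m => mul_measureReal_biUnion_exitsAt_zero_le hX hiid hlaw hC hnonneg
      (fun x hx => hharm x hx.1) m

theorem le_mul_measureReal_iUnion_exitsAt_zero (hX : ∀ i, Measurable (X i))
    (hiid : iIndepFun X P) (hlaw : ∀ i, P.map (X i) = μ.toMeasure) (hC : ∀ x, |h x| ≤ C)
    (hnonneg : ∀ x, 0 ≤ h x) (hharm : ∀ x : ℤ, 1 ≤ x → h x = ∑' y, (μ y).toReal * h (x + y))
    (hzero : ∀ x < 0, h x = 0) (hvanish : Tendsto h atTop (𝓝 0))
    (hunbdd : ∀ᵐ ω ∂P, ∀ M : ℤ, ∃ n, M ≤ randomWalk k X n ω) :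
    h k ≤ h 0 * P.real (⋃ n, exitsAt (randomWalk k X) (Set.Ici 1) n ∩
      {ω | randomWalk k X n ω = 0}) := by
  set R := randomWalk k X
  set p := P.real (⋃ n, exitsAt R (Set.Ici 1) n ∩ {ω | R n ω = 0})
  have hR : ∀ n, Measurable (R n) := fun n => measurable_randomWalk fun i _ => hX i
  refine le_of_forall_pos_le_add fun ε hε => ?_
  obtain ⟨M, hM⟩ := eventually_atTop.1 (hvanish.eventually (ge_mem_nhds hε))
  have hlim : Tendsto (fun N => C * P.real (staysIn R (Set.Ico 1 M) N) + h 0 * p + ε) atTop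
      (𝓝 (h 0 * p + ε)) := by
    simpa [add_assoc] using ((tendsto_measureReal_staysIn_atTop hR bddAbove_Ico hunbdd).const_mul
      C).add_const (h 0 * p + ε)
  refine ge_of_tendsto' hlim fun N => (le_mul_measureReal_biUnion_exitsAt_zero_add hX hiid hlaw hC
    (fun x hx => hharm x hx.1) hzero hε.le hM N).trans ?_
  gcongr
  · exact hnonneg 0
  · exact measureReal_mono (Set.iUnion₂_subset fun n _ => exitsAt_Ico_inter_subset_iUnion R M n)

end ExitBounds

theorem optional_stopping_hitting_zero_general
    (Ω : Type*) [MeasurableSpace Ω] (P : Measure Ω) [IsProbabilityMeasure P]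
    (μ : PMF ℤ) (X : ℕ → Ω → ℤ)
    (hX : ∀ i, Measurable (X i))
    (hiid : iIndepFun X P)
    (hlaw : ∀ i, Measure.map (X i) P = μ.toMeasure)
    (k : ℤ)
    (hlimsup : ∀ᵐ ω ∂P, ∀ M : ℤ, ∃ n : ℕ, M ≤ k + ∑ i ∈ Finset.range n, X i ω)
    (h : ℤ → ℝ) (hnonneg : ∀ x, 0 ≤ h x) (hbdd : ∃ M : ℝ, ∀ x, h x ≤ M)
    (hzero : ∀ x : ℤ, x < 0 → h x = 0)
    (hvanish : Tendsto h atTop (nhds 0))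
    (hharm : ∀ x : ℤ, 1 ≤ x → h x = ∑' y : ℤ, (μ y).toReal * h (x + y)) :
    h k = h 0 *
      (P {ω | ∃ n : ℕ, k + ∑ i ∈ Finset.range n, X i ω = 0 ∧
              ∀ j < n, 1 ≤ k + ∑ i ∈ Finset.range j, X i ω}).toReal := by
  obtain ⟨C, hC⟩ : ∃ C, ∀ x, |h x| ≤ C :=
    let ⟨C, hC⟩ := hbdd
    ⟨C, fun x => (abs_of_nonneg (hnonneg x)).trans_le (hC x)⟩
  change h k = h 0 * P.real {ω | ∃ n, randomWalk k X n ω = 0 ∧ ∀ j < n, 1 ≤ randomWalk k X j ω}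
  rw [setOf_exists_eq_zero_eq_iUnion_exitsAt]
  exact le_antisymm
    (le_mul_measureReal_iUnion_exitsAt_zero hX hiid hlaw hC hnonneg hharm hzero hvanish hlimsup)
    (mul_measureReal_iUnion_exitsAt_zero_le hX hiid hlaw hC hnonneg hharm)

/-- **Optional stopping characterization of `H^↓`.** Let `(R_n)` be a `μ`-random walk started
at `k ≥ 1` with `limsup R_n = +∞` a.s., and let `h : ℤ → [0,∞)` be bounded, vanishing on the
negative integers, tending to `0` at `+∞`, and `μ`-harmonic on the positive integers. Then
`h(k) = h(0) · P(τ < ∞ and R_τ = 0)` where `τ = inf{n ≥ 0 : R_n ≤ 0}` (the event being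
expressed as the existence of `n` with `R_n = 0` and `R_i ≥ 1` for all `i < n`). -/
theorem optional_stopping_hitting_zero
    (Ω : Type*) [MeasurableSpace Ω] (P : Measure Ω) [IsProbabilityMeasure P]
    (μ : PMF ℤ) (X : ℕ → Ω → ℤ)
    (hX : ∀ i, Measurable (X i))
    (hiid : iIndepFun X P)
    (hlaw : ∀ i, Measure.map (X i) P = μ.toMeasure)
    (k : ℤ) (hk : 1 ≤ k)
    (hlimsup : ∀ᵐ ω ∂P, ∀ M : ℤ, ∃ n : ℕ, M ≤ k + ∑ i ∈ Finset.range n, X i ω)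
    (h : ℤ → ℝ) (hnonneg : ∀ x, 0 ≤ h x) (hbdd : ∃ M : ℝ, ∀ x, h x ≤ M)
    (hzero : ∀ x : ℤ, x < 0 → h x = 0)
    (hvanish : Tendsto h atTop (nhds 0))
    (hharm : ∀ x : ℤ, 1 ≤ x → h x = ∑' y : ℤ, (μ y).toReal * h (x + y)) :
    h k = h 0 *
      (P {ω | ∃ n : ℕ, k + ∑ i ∈ Finset.range n, X i ω = 0 ∧
              ∀ j < n, 1 ≤ k + ∑ i ∈ Finset.range j, X i ω}).toReal :=
  optional_stopping_hitting_zero_general Ω P μ X hX hiid hlaw k hlimsup h hnonneg hbdd hzero hvanish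
    hharm
end
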